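/- arXiv:1812.05145 — 10 statements merged into one kernel-verified Lean document; each statement's English description precedes it below -/
import Mathlib

section
/- If there exists an orthogonal array OA_λ(k,n) with k ≥ 2, n ≥ 2 and λ ≥ 1, then λn² ≥ k(n−1) + 1 (equivalently, λ ≥ (k(n−1)+1)/n²). -/
/-!
Fix a row `s` and let `d r` be the number of columns in which row `r` agrees with `s`. Double
counting incidences of rows with columns, resp. with ordered pairs of distinct columns, gives
`∑ d = kλn` and `∑ d (d - 1) = k(k-1)λ`. On the other `N - 1 = λn² - 1` rows (as `d s = k`),
Cauchy–Schwarz gives `(∑ d)² ≤ (N - 1) ∑ d²`, and by the two counts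
`(N - 1) ∑ d² - (∑ d)² = kλ(n-1) (N - 1 - k(n-1))`.
-/

open Finset Fintype

theorem Finset.card_sq_eq_card_add_card_offDiag {α : Type*} [DecidableEq α] (s : Finset α) :
    #s ^ 2 = #s + #s.offDiag := by
  rw [offDiag_card, sq]
  have := Nat.le_mul_self #s
  omega

theorem mul_sub_one_add_one_le_mul_sq_of_sq_le {R : Type*} [CommRing R] [LinearOrder R]
    [IsStrictOrderedRing R] {k l n : R} (hk : 0 < k) (hl : 0 < l) (hn : 1 < n)
    (h : (k * (l * n - 1)) ^ 2 ≤ (l * n ^ 2 - 1) * (k * (l * n - 1) + k * (k - 1) * (l - 1))) :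
    k * (n - 1) + 1 ≤ l * n ^ 2 := by
  have key : (l * n ^ 2 - 1) * (k * (l * n - 1) + k * (k - 1) * (l - 1)) - (k * (l * n - 1)) ^ 2
      = k * l * (n - 1) * (l * n ^ 2 - 1 - k * (n - 1)) := by ring
  have hpos : 0 < k * l * (n - 1) := by have := sub_pos.2 hn; positivity
  have hprod : 0 ≤ k * l * (n - 1) * (l * n ^ 2 - 1 - k * (n - 1)) := by rw [← key]; linarith
  linarith [(mul_nonneg_iff_of_pos_left hpos).1 hprod]

variable {ι κ α : Type*} [DecidableEq α]

def agreementSet [Fintype κ] (A : ι → κ → α) (s r : ι) : Finset κ := {j | A r j = A s j}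

theorem card_agreementSet_self [Fintype κ] (A : ι → κ → α) (s : ι) :
    #(agreementSet A s s) = card κ := by
  simp [agreementSet]

variable [Fintype ι]

def IsOrthogonalArray (lam : ℕ) (A : ι → κ → α) : Prop :=
  ∀ j j' : κ, j ≠ j' → ∀ x y : α, #{r | A r j = x ∧ A r j' = y} = lam

namespace IsOrthogonalArray

variable {lam : ℕ} {A : ι → κ → α}

theorem sum_card_offDiag_agreementSet [Fintype κ] [DecidableEq κ] (hA : IsOrthogonalArray lam A)
    (s : ι) :
    ∑ r, #(agreementSet A s r).offDiag = #(univ : Finset κ).offDiag * lam := by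
  let agreeAtBoth := fun r (p : κ × κ) => A r p.1 = A s p.1 ∧ A r p.2 = A s p.2
  have double_count := sum_card_bipartiteAbove_eq_sum_card_bipartiteBelow
    (s := (univ : Finset ι)) (t := (univ : Finset κ).offDiag) agreeAtBoth
  have hoff (r : ι) :
      (agreementSet A s r).offDiag = (univ : Finset κ).offDiag.bipartiteAbove agreeAtBoth r := by
    ext p
    simp only [agreementSet, agreeAtBoth, mem_offDiag, mem_filter, mem_univ, true_and,
      mem_bipartiteAbove]
    tauto
  simp only [hoff, double_count]
  rw [sum_const_nat]
  rintro ⟨j, j'⟩ hp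
  exact hA j j' (mem_offDiag.1 hp).2.2 _ _

variable [Nontrivial κ]

theorem pos (hA : IsOrthogonalArray lam A) (s : ι) : 0 < lam := by
  obtain ⟨j, j', h⟩ := exists_pair_ne κ
  rw [← hA j j' h (A s j) (A s j')]
  exact card_pos.2 ⟨s, by simp⟩

theorem card_filter_apply_eq [Fintype α] (hA : IsOrthogonalArray lam A) (j : κ) (x : α) :
    #{r | A r j = x} = lam * card α := by
  obtain ⟨j', h⟩ := exists_ne j
  rw [card_eq_sum_card_fiberwise (f := fun r => A r j') (t := univ) fun _ _ => mem_univ _]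
  simp_rw [filter_filter]
  simp [hA j j' h.symm x, mul_comm]

theorem card_eq [Fintype α] (hA : IsOrthogonalArray lam A) : card ι = lam * card α ^ 2 := by
  rw [← card_univ, card_eq_sum_card_fiberwise (f := fun r => A r (Classical.arbitrary κ))
    (t := univ) fun _ _ => mem_univ _]
  simp [hA.card_filter_apply_eq, sq, mul_left_comm]

variable [Fintype κ]

theorem sum_card_agreementSet [Fintype α] (hA : IsOrthogonalArray lam A) (s : ι) :
    ∑ r, #(agreementSet A s r) = card κ * (lam * card α) := by
  have double_count := sum_card_bipartiteAbove_eq_sum_card_bipartiteBelow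
    (s := (univ : Finset ι)) (t := (univ : Finset κ)) (fun r j => A r j = A s j)
  simp only [bipartiteAbove, bipartiteBelow] at double_count
  simp [agreementSet, double_count, hA.card_filter_apply_eq]

theorem sum_card_agreementSet_sq [DecidableEq κ] [Fintype α] (hA : IsOrthogonalArray lam A)
    (s : ι) :
    ∑ r, #(agreementSet A s r) ^ 2
      = card κ * (lam * card α) + #(univ : Finset κ).offDiag * lam := by
  simp only [card_sq_eq_card_add_card_offDiag, sum_add_distrib, hA.sum_card_agreementSet s,
    hA.sum_card_offDiag_agreementSet s]

variable [DecidableEq ι] [Fintype α]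

theorem sum_erase_card_agreementSet (hA : IsOrthogonalArray lam A) (s : ι) :
    ∑ r ∈ univ.erase s, (#(agreementSet A s r) : ℤ) = card κ * (lam * card α - 1) := by
  have h := congrArg (Nat.cast : ℕ → ℤ) (hA.sum_card_agreementSet s)
  rw [← add_sum_erase _ _ (mem_univ s), card_agreementSet_self] at h
  push_cast at h
  linarith

theorem sum_erase_card_agreementSet_sq [DecidableEq κ] (hA : IsOrthogonalArray lam A) (s : ι) :
    ∑ r ∈ univ.erase s, (#(agreementSet A s r) : ℤ) ^ 2
      = card κ * (lam * card α - 1) + card κ * (card κ - 1) * (lam - 1) := by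
  have h := congrArg (Nat.cast : ℕ → ℤ) (hA.sum_card_agreementSet_sq s)
  have hk := congrArg (Nat.cast : ℕ → ℤ) (card_sq_eq_card_add_card_offDiag (univ : Finset κ))
  rw [← add_sum_erase _ _ (mem_univ s), card_agreementSet_self] at h
  rw [card_univ] at hk
  push_cast at h hk
  linear_combination h - (lam : ℤ) * hk

end IsOrthogonalArray

theorem IsOrthogonalArray.card_mul_sub_one_add_one_le [Fintype κ] [Fintype α] [Nonempty ι]
    [Nontrivial κ] {lam : ℕ} {A : ι → κ → α} (hA : IsOrthogonalArray lam A) :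
    card κ * (card α - 1) + 1 ≤ card ι := by
  classical
  obtain ⟨s⟩ := ‹Nonempty ι›
  rcases le_or_gt (card α) 1 with hα | hα
  · simp only [Nat.sub_eq_zero_of_le hα, mul_zero, zero_add]
    exact Fintype.card_pos
  have hCS := sq_sum_le_card_mul_sum_sq (s := univ.erase s)
    (f := fun r => (#(agreementSet A s r) : ℤ))
  have hN : 1 ≤ card ι := Fintype.card_pos
  rw [hA.sum_erase_card_agreementSet, hA.sum_erase_card_agreementSet_sq,
    card_erase_of_mem (mem_univ s), card_univ, Nat.cast_sub hN, hA.card_eq] at hCS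
  rw [hA.card_eq]
  zify [hα.le]
  push_cast at hCS
  exact mul_sub_one_add_one_le_mul_sq_of_sq_le (by positivity) (by exact_mod_cast hA.pos s)
    (by exact_mod_cast hα) hCS

/-- Plackett-Burman bound: if an OA_λ(k,n) exists with k ≥ 2, n ≥ 2, λ ≥ 1,
then λn² ≥ k(n−1) + 1. -/
theorem plackett_burman_bound (k n lam : ℕ) (hk : 2 ≤ k) (hn : 2 ≤ n) (hlam : 1 ≤ lam)
    (A : Fin (lam * n ^ 2) → Fin k → Fin n)
    (hOA : ∀ j j' : Fin k, j ≠ j' → ∀ x y : Fin n,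
      (Finset.univ.filter (fun r => A r j = x ∧ A r j' = y)).card = lam) :
    k * (n - 1) + 1 ≤ lam * n ^ 2 := by
  have : Nontrivial (Fin k) := Fin.nontrivial_iff_two_le.2 hk
  have : Nonempty (Fin (lam * n ^ 2)) := ⟨⟨0, Nat.mul_pos hlam (pow_pos (by omega) 2)⟩⟩
  simpa using IsOrthogonalArray.card_mul_sub_one_add_one_le hOA
end

section
/- If there exists an orthogonal array OA_λ(k,n) with k ≥ 2, n ≥ 2 and λ ≥ 1 that contains a row repeated m times, then λn² ≥ m(k(n−1) + 1) (equivalently, λ ≥ m(k(n−1)+1)/n²). -/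
open Finset

/-- If an OA_λ(k,n) (k ≥ 2, n ≥ 2, λ ≥ 1) contains a row repeated m times,
then λn² ≥ m(k(n−1) + 1). -/
theorem plackett_burman_repeated_row (k n lam m : ℕ) (hk : 2 ≤ k) (hn : 2 ≤ n) (hlam : 1 ≤ lam)
    (A : Fin (lam * n ^ 2) → Fin k → Fin n)
    (hOA : ∀ j j' : Fin k, j ≠ j' → ∀ x y : Fin n,
      (Finset.univ.filter (fun r => A r j = x ∧ A r j' = y)).card = lam)
    (S : Finset (Fin (lam * n ^ 2))) (hScard : S.card = m)
    (hSrep : ∀ r ∈ S, ∀ r' ∈ S, A r = A r') :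
    m * (k * (n - 1) + 1) ≤ lam * n ^ 2 := by
  classical
  rcases S.eq_empty_or_nonempty with hS | ⟨s₀, hs₀⟩
  · simp [hS] at hScard
    simp [← hScard]
  obtain ⟨p, rfl⟩ : ∃ p, k = p + 2 := ⟨k - 2, by omega⟩
  obtain ⟨q, rfl⟩ : ∃ q, n = q + 2 := ⟨n - 2, by omega⟩
  show m * ((p + 2) * (q + 1) + 1) ≤ lam * (q + 2) ^ 2
  set ρ := A s₀ with hρ
  -- column counts
  haveI : Nontrivial (Fin (p + 2)) := ⟨⟨0, 1, by simp [Fin.ext_iff]⟩⟩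
  have hcol : ∀ (j : Fin (p + 2)) (x : Fin (q + 2)),
      (Finset.univ.filter (fun r => A r j = x)).card = lam * (q + 2) := by
    intro j x
    obtain ⟨j', hj'⟩ := exists_ne j
    rw [Finset.card_eq_sum_card_fiberwise (f := fun r => A r j') (t := Finset.univ)
      (fun r _ => Finset.mem_univ _)]
    have : ∀ y : Fin (q + 2),
        ((Finset.univ.filter (fun r => A r j = x)).filter (fun r => A r j' = y)).card = lam := by
      intro y
      rw [Finset.filter_filter]
      exact hOA j j' hj'.symm x y
    simp [this, Finset.sum_const, mul_comm]
  have hne : ∀ j : Fin (p + 2),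
      (Finset.univ.filter (fun r => A r j ≠ ρ j)).card = lam * (q + 2) * (q + 1) := by
    intro j
    have h1 := hcol j (ρ j)
    have h2 : (Finset.univ.filter (fun r => A r j ≠ ρ j)).card
        + (Finset.univ.filter (fun r => A r j = ρ j)).card = lam * (q + 2) ^ 2 := by
      rw [add_comm, Finset.card_filter_add_card_filter_not]
      simp
    have h3 : lam * (q + 2) ^ 2 = lam * (q + 2) * (q + 1) + lam * (q + 2) := by ring
    omega
  have hpair : ∀ j j' : Fin (p + 2), j ≠ j' →
      (Finset.univ.filter (fun r => A r j ≠ ρ j ∧ A r j' ≠ ρ j')).card = lam * (q + 1) ^ 2 := by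
    intro j j' hjj'
    rw [Finset.card_eq_sum_card_fiberwise (f := fun r => (A r j, A r j'))
      (t := (Finset.univ.erase (ρ j)) ×ˢ (Finset.univ.erase (ρ j')))
      (by intro r hr; simp only [Finset.mem_coe, Finset.mem_filter] at hr
          simp [Finset.mem_product, hr.2.1, hr.2.2])]
    have key : ∀ b ∈ (Finset.univ.erase (ρ j)) ×ˢ (Finset.univ.erase (ρ j')),
        ((Finset.univ.filter (fun r => A r j ≠ ρ j ∧ A r j' ≠ ρ j')).filter
          (fun r => (A r j, A r j') = b)).card = lam := by
      rintro ⟨x, y⟩ hb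
      simp only [Finset.mem_product, Finset.mem_erase, Finset.mem_univ, and_true] at hb
      have hset : (Finset.univ.filter (fun r => A r j ≠ ρ j ∧ A r j' ≠ ρ j')).filter
            (fun r => (A r j, A r j') = (x, y))
          = Finset.univ.filter (fun r => A r j = x ∧ A r j' = y) := by
        ext r
        simp only [Finset.mem_filter, Finset.mem_univ, true_and, Prod.mk.injEq]
        constructor
        · rintro ⟨-, h⟩; exact h
        · rintro ⟨h1, h2⟩; exact ⟨⟨h1 ▸ hb.1, h2 ▸ hb.2⟩, h1, h2⟩
      rw [hset, hOA j j' hjj' x y]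
    rw [Finset.sum_congr rfl key, Finset.sum_const, Finset.card_product]
    simp only [Finset.card_erase_of_mem (Finset.mem_univ _), Finset.card_univ,
      Fintype.card_fin, smul_eq_mul]
    show (q + 1) * (q + 1) * lam = lam * (q + 1) ^ 2
    ring
  set e : Fin (lam * (q + 2) ^ 2) → ℕ :=
    fun r => (Finset.univ.filter (fun j => A r j ≠ ρ j)).card with he
  have hesum : ∀ r, e r = ∑ j, if A r j ≠ ρ j then 1 else 0 := by
    intro r; rw [he]; exact Finset.card_filter _ _
  have he1 : ∑ r, e r = (p + 2) * (lam * (q + 2) * (q + 1)) := by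
    simp_rw [hesum]
    rw [Finset.sum_comm]
    have : ∀ j : Fin (p + 2),
        (∑ r, if A r j ≠ ρ j then 1 else 0) = lam * (q + 2) * (q + 1) := by
      intro j; rw [← Finset.card_filter]; exact hne j
    rw [Finset.sum_congr rfl (fun j _ => this j), Finset.sum_const, Finset.card_univ,
      Fintype.card_fin, smul_eq_mul]
  have he2 : ∑ r, (e r) ^ 2
      = (p + 2) * (lam * (q + 2) * (q + 1) + (p + 1) * (lam * (q + 1) ^ 2)) := by
    have hsq : ∀ r, (e r) ^ 2 = ∑ j, ∑ j',
        if (A r j ≠ ρ j ∧ A r j' ≠ ρ j') then 1 else 0 := by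
      intro r
      rw [sq, hesum r, Finset.sum_mul_sum]
      congr 1; ext j; congr 1; ext j'
      by_cases h1 : A r j ≠ ρ j <;> by_cases h2 : A r j' ≠ ρ j' <;> simp [h1, h2]
    simp_rw [hsq]
    rw [Finset.sum_comm]
    have inner : ∀ j : Fin (p + 2),
        (∑ r, ∑ j', if (A r j ≠ ρ j ∧ A r j' ≠ ρ j') then 1 else 0)
          = lam * (q + 2) * (q + 1) + (p + 1) * (lam * (q + 1) ^ 2) := by
      intro j
      rw [Finset.sum_comm]
      have hdiag : (∑ r, if (A r j ≠ ρ j ∧ A r j ≠ ρ j) then 1 else 0)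
          = lam * (q + 2) * (q + 1) := by
        rw [← Finset.card_filter]
        simp only [and_self]
        exact hne j
      have hoff : ∀ j' ∈ Finset.univ.erase j,
          (∑ r, if (A r j ≠ ρ j ∧ A r j' ≠ ρ j') then 1 else 0) = lam * (q + 1) ^ 2 := by
        intro j' hj'
        rw [← Finset.card_filter]
        exact hpair j j' (Finset.ne_of_mem_erase hj').symm
      rw [← Finset.add_sum_erase _ _ (Finset.mem_univ j), hdiag,
        Finset.sum_congr rfl hoff, Finset.sum_const]
      simp only [Finset.card_erase_of_mem (Finset.mem_univ _), Finset.card_univ,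
        Fintype.card_fin, smul_eq_mul]
      rfl
    rw [Finset.sum_congr rfl (fun j _ => inner j), Finset.sum_const]
    simp [Finset.card_univ]
  set T : Finset (Fin (lam * (q + 2) ^ 2)) :=
    Finset.univ.filter (fun r => e r ≠ 0) with hT
  have hCS : (∑ r, e r) ^ 2 ≤ T.card * ∑ r, (e r) ^ 2 := by
    have h1 : ∑ r ∈ T, e r = ∑ r, e r := Finset.sum_filter_ne_zero _
    have h2 : ∑ r ∈ T, (e r) ^ 2 = ∑ r, (e r) ^ 2 := by
      apply Finset.sum_subset (Finset.filter_subset _ _)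
      intro r _ hr
      simp only [hT, Finset.mem_filter, Finset.mem_univ, true_and, not_not] at hr
      simp [hr]
    have hZ := sq_sum_le_card_mul_sum_sq (s := T) (f := fun r => (e r : ℤ))
    rw [← h1, ← h2]
    exact_mod_cast hZ
  -- cancel to get the key bound on T.card
  have key : lam * (q + 2) ^ 2 * ((p + 2) * (q + 1)) ≤ T.card * ((p + 2) * (q + 1) + 1) := by
    have hL : 0 < lam * ((p + 2) * (q + 1)) := by positivity
    apply Nat.le_of_mul_le_mul_left _ hL
    calc lam * ((p + 2) * (q + 1)) * (lam * (q + 2) ^ 2 * ((p + 2) * (q + 1)))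
        = ((p + 2) * (lam * (q + 2) * (q + 1))) ^ 2 := by ring
      _ ≤ T.card * ((p + 2) * (lam * (q + 2) * (q + 1) + (p + 1) * (lam * (q + 1) ^ 2))) := by
          rw [← he1, ← he2]; exact hCS
      _ = lam * ((p + 2) * (q + 1)) * (T.card * ((p + 2) * (q + 1) + 1)) := by ring
  -- the repeated rows all have e = 0
  have hmZ : m ≤ (Finset.univ.filter (fun r => e r = 0)).card := by
    rw [← hScard]
    apply Finset.card_le_card
    intro r hr
    simp only [Finset.mem_filter, Finset.mem_univ, true_and]
    have : A r = ρ := hSrep r hr s₀ hs₀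
    simp [he, this]
  have hpart : (Finset.univ.filter (fun r => e r = 0)).card + T.card = lam * (q + 2) ^ 2 := by
    rw [hT, Finset.card_filter_add_card_filter_not]
    simp
  -- final arithmetic
  set c := (p + 2) * (q + 1) with hc
  have h3 : m * (c + 1) + T.card * (c + 1) ≤ T.card * (c + 1) + lam * (q + 2) ^ 2 := by
    calc m * (c + 1) + T.card * (c + 1)
        ≤ (Finset.univ.filter (fun r => e r = 0)).card * (c + 1) + T.card * (c + 1) :=
          Nat.add_le_add_right (Nat.mul_le_mul_right _ hmZ) _
      _ = (lam * (q + 2) ^ 2) * (c + 1) := by rw [← add_mul, hpart]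
      _ = lam * (q + 2) ^ 2 * c + lam * (q + 2) ^ 2 := by ring
      _ ≤ T.card * (c + 1) + lam * (q + 2) ^ 2 := Nat.add_le_add_right key _
  rw [add_comm (m * (c + 1))] at h3
  exact le_of_add_le_add_left h3
end

section
/- If there exists an orthogonal array OA_λ(k,n) with k ≥ 2, n ≥ 2 and λ ≥ 1 that contains a row repeated m times, then m ≤ λn² / (k(n−1) + 1). -/
/-!
Let `u` be the repeated row and `d r` the number of columns in which row `r` agrees with `u`.
Counting incidences with one and with two columns gives `∑ d = k n λ` and
`∑ d² = k (n λ + (k - 1) λ)`, hence the variance identity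
`∑ (n d - (k - 1))² = λ n² (k (n - 1) + 1)`. Each of the `m` copies of `u` has `d = k` and
contributes `(k (n - 1) + 1)²` to the left side, so `m (k (n - 1) + 1) ≤ λ n²`.
-/

open Finset

namespace OrthogonalArray

variable {ι κ α : Type*} [Fintype ι] [Fintype α] [DecidableEq α]

def IsOrthogonalArray (A : ι → κ → α) (lam : ℕ) : Prop :=
  ∀ j j' : κ, j ≠ j' → ∀ x y : α, #{r | A r j = x ∧ A r j' = y} = lam

def agreements [Fintype κ] (A : ι → κ → α) (u : κ → α) (r : ι) : ℕ :=
  #{j | A r j = u j}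

variable {A : ι → κ → α} {lam : ℕ}

theorem IsOrthogonalArray.card_filter_eq_of_ne (hA : IsOrthogonalArray A lam) {j j' : κ}
    (hjj' : j ≠ j') (x : α) : #{r | A r j = x} = Fintype.card α * lam := by
  rw [card_eq_sum_card_fiberwise (f := fun r => A r j') (t := univ) fun r _ => mem_univ _]
  simp only [filter_filter, hA j j' hjj', sum_const, card_univ, smul_eq_mul]

variable [Nontrivial κ]

theorem IsOrthogonalArray.card_filter_eq (hA : IsOrthogonalArray A lam) (j : κ) (x : α) :
    #{r | A r j = x} = Fintype.card α * lam :=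
  have ⟨_, hj'⟩ := exists_ne j
  hA.card_filter_eq_of_ne hj'.symm x

theorem IsOrthogonalArray.card_eq (hA : IsOrthogonalArray A lam) :
    Fintype.card ι = lam * Fintype.card α ^ 2 := by
  have ⟨j⟩ : Nonempty κ := inferInstance
  rw [← card_univ, card_eq_sum_card_fiberwise (f := fun r => A r j) (t := univ)
    fun r _ => mem_univ _]
  simp only [hA.card_filter_eq j, sum_const, card_univ, smul_eq_mul]
  ring

variable [Fintype κ]

theorem IsOrthogonalArray.sum_card_filter_and_eq (hA : IsOrthogonalArray A lam)
    (u : κ → α) (j : κ) : ∑ j', #{r | A r j = u j ∧ A r j' = u j'} =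
      Fintype.card α * lam + (Fintype.card κ - 1) * lam := by
  classical
  rw [← add_sum_erase _ _ (mem_univ j), sum_congr rfl fun j' hj' =>
    hA j j' (ne_of_mem_erase hj').symm (u j) (u j')]
  simp only [and_self, hA.card_filter_eq, sum_const, card_erase_of_mem (mem_univ j), card_univ,
    smul_eq_mul]

theorem IsOrthogonalArray.sum_agreements (hA : IsOrthogonalArray A lam) (u : κ → α) :
    ∑ r, agreements A u r = Fintype.card κ * (Fintype.card α * lam) := by
  simp only [agreements, card_filter]
  rw [sum_comm]
  simp only [← card_filter, hA.card_filter_eq, sum_const, card_univ, smul_eq_mul]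

theorem IsOrthogonalArray.sum_agreements_sq (hA : IsOrthogonalArray A lam) (u : κ → α) :
    ∑ r, agreements A u r ^ 2 =
      Fintype.card κ * (Fintype.card α * lam + (Fintype.card κ - 1) * lam) := by
  simp only [agreements, card_filter, sq, sum_mul_sum, ite_zero_mul_ite_zero, one_mul]
  rw [sum_comm, sum_congr rfl fun j _ => sum_comm]
  simp only [← card_filter, hA.sum_card_filter_and_eq, sum_const, card_univ, smul_eq_mul]

theorem IsOrthogonalArray.sum_sq_mul_agreements_sub (hA : IsOrthogonalArray A lam)
    (u : κ → α) :
    ∑ r, ((Fintype.card α : ℤ) * agreements A u r - (Fintype.card κ - 1)) ^ 2 =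
      (lam : ℤ) * Fintype.card α ^ 2 * (Fintype.card κ * (Fintype.card α - 1) + 1) := by
  set n : ℤ := (Fintype.card α : ℤ)
  set k : ℤ := (Fintype.card κ : ℤ)
  have hk : 1 ≤ Fintype.card κ := Fintype.card_pos
  have h1 : ∑ r, (agreements A u r : ℤ) = k * (n * lam) := by
    simp only [n, k]; exact_mod_cast hA.sum_agreements u
  have h2 : ∑ r, (agreements A u r : ℤ) ^ 2 = k * (n * lam + (k - 1) * lam) := by
    have := hA.sum_agreements_sq u
    zify [hk] at this
    simpa only [n, k] using this
  have hN : (Fintype.card ι : ℤ) = lam * n ^ 2 := by simp only [n]; exact_mod_cast hA.card_eq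
  calc ∑ r, (n * agreements A u r - (k - 1)) ^ 2
      = ∑ r, (n ^ 2 * (agreements A u r : ℤ) ^ 2 - 2 * n * (k - 1) * agreements A u r
          + (k - 1) ^ 2) := sum_congr rfl fun r _ => by ring
    _ = n ^ 2 * ∑ r, (agreements A u r : ℤ) ^ 2
          - 2 * n * (k - 1) * ∑ r, (agreements A u r : ℤ)
          + Fintype.card ι * (k - 1) ^ 2 := by
      rw [sum_add_distrib, sum_sub_distrib, ← mul_sum, ← mul_sum, sum_const, card_univ,
        nsmul_eq_mul]
    _ = lam * n ^ 2 * (k * (n - 1) + 1) := by rw [h1, h2, hN]; ring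

theorem IsOrthogonalArray.card_mul_le [Nonempty α] (hA : IsOrthogonalArray A lam) (u : κ → α)
    (S : Finset ι) (hS : ∀ r ∈ S, A r = u) :
    (#S : ℤ) * (Fintype.card κ * (Fintype.card α - 1) + 1) ≤
      (lam : ℤ) * Fintype.card α ^ 2 := by
  set n : ℤ := (Fintype.card α : ℤ)
  set k : ℤ := (Fintype.card κ : ℤ)
  have hD : 0 < k * (n - 1) + 1 := by
    have : (1 : ℤ) ≤ n := by simp only [n]; exact_mod_cast Fintype.card_pos
    have : 0 ≤ k := by positivity
    nlinarith
  have hagree : ∀ r ∈ S, agreements A u r = Fintype.card κ := fun r hr => by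
    simp [agreements, hS r hr]
  have key : (#S : ℤ) * (k * (n - 1) + 1) * (k * (n - 1) + 1) ≤
      lam * n ^ 2 * (k * (n - 1) + 1) := calc
    (#S : ℤ) * (k * (n - 1) + 1) * (k * (n - 1) + 1)
        = ∑ r ∈ S, (n * agreements A u r - (k - 1)) ^ 2 := by
      rw [sum_congr rfl fun r hr => by rw [hagree r hr], sum_const, nsmul_eq_mul]; ring
    _ ≤ ∑ r, (n * agreements A u r - (k - 1)) ^ 2 :=
      sum_le_sum_of_subset_of_nonneg (subset_univ S) fun _ _ _ => sq_nonneg _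
    _ = lam * n ^ 2 * (k * (n - 1) + 1) := hA.sum_sq_mul_agreements_sub u
  exact le_of_mul_le_mul_right key hD

end OrthogonalArray

theorem repeated_row_multiplicity_bound_general (k n lam m : ℕ) (hk : 2 ≤ k) (hn : 2 ≤ n)
    (A : Fin (lam * n ^ 2) → Fin k → Fin n)
    (hOA : ∀ j j' : Fin k, j ≠ j' → ∀ x y : Fin n,
      (Finset.univ.filter (fun r => A r j = x ∧ A r j' = y)).card = lam)
    (S : Finset (Fin (lam * n ^ 2))) (hScard : S.card = m)
    (hSrep : ∀ r ∈ S, ∀ r' ∈ S, A r = A r') :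
    (m : ℚ) ≤ ((lam : ℚ) * n ^ 2) / ((k : ℚ) * ((n : ℚ) - 1) + 1) := by
  have hD : (0 : ℚ) < k * ((n : ℚ) - 1) + 1 := by
    have : (1 : ℚ) ≤ n := by exact_mod_cast (by omega : 1 ≤ n)
    nlinarith
  rw [le_div_iff₀ hD, ← hScard]
  rcases S.eq_empty_or_nonempty with rfl | ⟨r₀, hr₀⟩
  · simp only [card_empty, Nat.cast_zero, zero_mul]
    positivity
  · have : Nontrivial (Fin k) := Fin.nontrivial_iff_two_le.mpr hk
    have : Nonempty (Fin n) := ⟨⟨0, by omega⟩⟩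
    have hbound := OrthogonalArray.IsOrthogonalArray.card_mul_le hOA (A r₀) S
      fun r hr => hSrep r hr r₀ hr₀
    simp only [Fintype.card_fin] at hbound
    exact_mod_cast hbound

/-- If an OA_λ(k,n) (k ≥ 2, n ≥ 2, λ ≥ 1) contains a row repeated m times,
then m ≤ λn² / (k(n−1) + 1). -/
theorem repeated_row_multiplicity_bound (k n lam m : ℕ) (hk : 2 ≤ k) (hn : 2 ≤ n)
    (hlam : 1 ≤ lam)
    (A : Fin (lam * n ^ 2) → Fin k → Fin n)
    (hOA : ∀ j j' : Fin k, j ≠ j' → ∀ x y : Fin n,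
      (Finset.univ.filter (fun r => A r j = x ∧ A r j' = y)).card = lam)
    (S : Finset (Fin (lam * n ^ 2))) (hScard : S.card = m)
    (hSrep : ∀ r ∈ S, ∀ r' ∈ S, A r = A r') :
    (m : ℚ) ≤ ((lam : ℚ) * n ^ 2) / ((k : ℚ) * ((n : ℚ) - 1) + 1) :=
  repeated_row_multiplicity_bound_general k n lam m hk hn A hOA S hScard hSrep
end

section
/- Let A be an orthogonal array OA_λ(k,n) (k ≥ 2, n ≥ 2, λ ≥ 1) with N = λn² rows, fix a row index r₀ with row ρ, and for each other row index i let a_i be the number of coordinates in which row i agrees with ρ. Then the sum over all rows i ≠ r₀ of a_i equals k(λn − 1), the sum of a_i(a_i − 1) equals k(k−1)(λ − 1), and the sum of a_i² equals k(k(λ−1) + λ(n−1)). -/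
/-- Moment identities for an OA_λ(k,n): fixing a row r₀ with row ρ = A r₀ and letting
a_i be the number of agreements of row i with ρ, the sums over i ≠ r₀ of a_i,
a_i(a_i−1) and a_i² are k(λn−1), k(k−1)(λ−1) and k(k(λ−1)+λ(n−1)) respectively. -/
theorem oa_moment_identities (k n lam : ℕ) (hk : 2 ≤ k) (hn : 2 ≤ n) (hlam : 1 ≤ lam)
    (A : Fin (lam * n ^ 2) → Fin k → Fin n)
    (hOA : ∀ j j' : Fin k, j ≠ j' → ∀ x y : Fin n,
      (Finset.univ.filter (fun r => A r j = x ∧ A r j' = y)).card = lam)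
    (r₀ : Fin (lam * n ^ 2))
    (a : Fin (lam * n ^ 2) → ℕ)
    (ha : ∀ i, a i = (Finset.univ.filter (fun j => A i j = A r₀ j)).card) :
    (∑ i ∈ Finset.univ.erase r₀, (a i : ℤ)) = (k : ℤ) * ((lam : ℤ) * n - 1) ∧
    (∑ i ∈ Finset.univ.erase r₀, (a i : ℤ) * ((a i : ℤ) - 1)) =
      (k : ℤ) * ((k : ℤ) - 1) * ((lam : ℤ) - 1) ∧
    (∑ i ∈ Finset.univ.erase r₀, (a i : ℤ) ^ 2) =
      (k : ℤ) * ((k : ℤ) * ((lam : ℤ) - 1) + (lam : ℤ) * ((n : ℤ) - 1)) := by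
  classical
  set ind : Fin (lam * n ^ 2) → Fin k → ℤ := fun i j => if A i j = A r₀ j then 1 else 0 with hind
  have hacast : ∀ i, (a i : ℤ) = ∑ j : Fin k, ind i j := by
    intro i
    rw [ha i, Finset.card_filter]
    push_cast
    rfl
  -- column count: each column agrees with rho in exactly lam*n rows
  haveI : Nontrivial (Fin k) := Fin.nontrivial_iff_two_le.mpr hk
  have hcol : ∀ j : Fin k, (∑ i : Fin (lam * n ^ 2), ind i j) = (lam : ℤ) * n := by
    intro j
    obtain ⟨j', hj'⟩ := exists_ne j
    have hcard : (Finset.univ.filter (fun r => A r j = A r₀ j)).card = lam * n := by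
      rw [Finset.card_eq_sum_card_fiberwise
        (f := fun r => A r j') (t := Finset.univ) (fun _ _ => Finset.mem_univ _)]
      have hfib : ∀ y : Fin n,
          (Finset.filter (fun r => A r j' = y)
            (Finset.univ.filter fun r => A r j = A r₀ j)).card = lam := by
        intro y
        rw [Finset.filter_filter]
        exact hOA j j' (Ne.symm hj') (A r₀ j) y
      rw [Finset.sum_congr rfl fun y _ => hfib y]
      simp [Finset.card_univ, mul_comm]
    rw [hind]
    simp only
    rw [Finset.sum_boole, hcard]
    push_cast
    ring
  have hpair : ∀ j j' : Fin k, j ≠ j' →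
      (∑ i : Fin (lam * n ^ 2), ind i j * ind i j') = (lam : ℤ) := by
    intro j j' h
    have hmul : ∀ i : Fin (lam * n ^ 2), ind i j * ind i j' =
        if A i j = A r₀ j ∧ A i j' = A r₀ j' then (1:ℤ) else 0 := by
      intro i
      by_cases h1 : A i j = A r₀ j <;> by_cases h2 : A i j' = A r₀ j' <;>
        simp [hind, h1, h2]
    rw [Finset.sum_congr rfl fun i _ => hmul i, Finset.sum_boole]
    exact_mod_cast hOA j j' h (A r₀ j) (A r₀ j')
  have hr0 : ∀ j : Fin k, ind r₀ j = 1 := by intro j; simp [hind]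
  have hsq : ∀ i j, ind i j * ind i j = ind i j := by
    intro i j; by_cases h1 : A i j = A r₀ j <;> simp [hind, h1]
  -- erase sums
  have hcolE : ∀ j : Fin k, (∑ i ∈ Finset.univ.erase r₀, ind i j) = (lam : ℤ) * n - 1 := by
    intro j
    rw [Finset.sum_erase_eq_sub (Finset.mem_univ r₀), hcol, hr0]
  have hpairE : ∀ j j' : Fin k, j ≠ j' →
      (∑ i ∈ Finset.univ.erase r₀, ind i j * ind i j') = (lam : ℤ) - 1 := by
    intro j j' h
    rw [Finset.sum_erase_eq_sub (Finset.mem_univ r₀), hpair j j' h, hr0, hr0]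
    ring
  -- first moment
  have h1 : (∑ i ∈ Finset.univ.erase r₀, (a i : ℤ)) = (k : ℤ) * ((lam : ℤ) * n - 1) := by
    calc (∑ i ∈ Finset.univ.erase r₀, (a i : ℤ))
        = ∑ i ∈ Finset.univ.erase r₀, ∑ j : Fin k, ind i j :=
          Finset.sum_congr rfl fun i _ => hacast i
      _ = ∑ j : Fin k, ∑ i ∈ Finset.univ.erase r₀, ind i j := Finset.sum_comm
      _ = ∑ j : Fin k, ((lam : ℤ) * n - 1) := Finset.sum_congr rfl fun j _ => hcolE j
      _ = (k : ℤ) * ((lam : ℤ) * n - 1) := by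
          simp [Finset.card_univ, mul_comm]
          ring
  -- second moment (squares)
  have hk1 : (((k : ℕ) - 1 : ℕ) : ℤ) = (k : ℤ) - 1 := by omega
  have h3 : (∑ i ∈ Finset.univ.erase r₀, (a i : ℤ) ^ 2) =
      (k : ℤ) * ((k : ℤ) * ((lam : ℤ) - 1) + (lam : ℤ) * ((n : ℤ) - 1)) := by
    have expand : ∀ i, (a i : ℤ) ^ 2 =
        ∑ j : Fin k, ∑ j' : Fin k, ind i j * ind i j' := by
      intro i
      rw [hacast, sq, Finset.sum_mul_sum]
    calc (∑ i ∈ Finset.univ.erase r₀, (a i : ℤ) ^ 2)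
        = ∑ i ∈ Finset.univ.erase r₀, ∑ j : Fin k, ∑ j' : Fin k, ind i j * ind i j' :=
          Finset.sum_congr rfl fun i _ => expand i
      _ = ∑ j : Fin k, ∑ i ∈ Finset.univ.erase r₀, ∑ j' : Fin k, ind i j * ind i j' :=
          Finset.sum_comm
      _ = ∑ j : Fin k, ∑ j' : Fin k, ∑ i ∈ Finset.univ.erase r₀, ind i j * ind i j' :=
          Finset.sum_congr rfl fun j _ => Finset.sum_comm
      _ = ∑ j : Fin k, (((lam : ℤ) * n - 1) + ((k : ℤ) - 1) * ((lam : ℤ) - 1)) := by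
          refine Finset.sum_congr rfl fun j _ => ?_
          rw [← Finset.sum_erase_add _ _ (Finset.mem_univ j)]
          have hdiag : (∑ i ∈ Finset.univ.erase r₀, ind i j * ind i j)
              = (lam : ℤ) * n - 1 := by
            rw [Finset.sum_congr rfl fun i _ => hsq i j]; exact hcolE j
          have hoff : (∑ j' ∈ Finset.univ.erase j,
              ∑ i ∈ Finset.univ.erase r₀, ind i j * ind i j') =
              ((k : ℤ) - 1) * ((lam : ℤ) - 1) := by
            rw [Finset.sum_congr rfl fun j' hj' =>
              hpairE j j' (Ne.symm (Finset.ne_of_mem_erase hj'))]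
            rw [Finset.sum_const, Finset.card_erase_of_mem (Finset.mem_univ j),
              Finset.card_univ, Fintype.card_fin, nsmul_eq_mul, hk1]
          rw [hdiag, hoff]; ring
      _ = (k : ℤ) * ((k : ℤ) * ((lam : ℤ) - 1) + (lam : ℤ) * ((n : ℤ) - 1)) := by
          rw [Finset.sum_const, Finset.card_univ, Fintype.card_fin, nsmul_eq_mul]
          ring
  refine ⟨h1, ?_, h3⟩
  have : (∑ i ∈ Finset.univ.erase r₀, (a i : ℤ) * ((a i : ℤ) - 1)) =
      (∑ i ∈ Finset.univ.erase r₀, (a i : ℤ) ^ 2) -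
      (∑ i ∈ Finset.univ.erase r₀, (a i : ℤ)) := by
    rw [← Finset.sum_sub_distrib]
    exact Finset.sum_congr rfl fun i _ => by ring
  rw [this, h1, h3]; ring
end

section
/- Let k ≥ 2, n ≥ 2, λ ≥ 1 be integers and suppose there exists an orthogonal array OA_λ(k,n) containing a row repeated m times. Then k(λn − m)² ≤ (λn² − m)(k(λ − m) + λ(n − 1)). -/
/-- If an OA_λ(k,n) (k ≥ 2, n ≥ 2, λ ≥ 1) contains a row repeated m times, then
k(λn − m)² ≤ (λn² − m)(k(λ − m) + λ(n − 1)). -/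
theorem oa_repeated_row_quadratic_inequality (k n lam m : ℕ) (hk : 2 ≤ k) (hn : 2 ≤ n)
    (hlam : 1 ≤ lam)
    (A : Fin (lam * n ^ 2) → Fin k → Fin n)
    (hOA : ∀ j j' : Fin k, j ≠ j' → ∀ x y : Fin n,
      (Finset.univ.filter (fun r => A r j = x ∧ A r j' = y)).card = lam)
    (S : Finset (Fin (lam * n ^ 2))) (hScard : S.card = m)
    (hSrep : ∀ r ∈ S, ∀ r' ∈ S, A r = A r') :
    (k : ℤ) * ((lam : ℤ) * n - m) ^ 2 ≤
      ((lam : ℤ) * n ^ 2 - m) * ((k : ℤ) * ((lam : ℤ) - m) + (lam : ℤ) * ((n : ℤ) - 1)) := by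
  classical
  have hNpos : 0 < lam * n ^ 2 := Nat.mul_pos (by omega) (by positivity)
  set r₀ : Fin (lam * n ^ 2) := if h : S.Nonempty then h.choose else ⟨0, hNpos⟩ with hr₀def
  have hSρ : ∀ r ∈ S, ∀ j, A r j = A r₀ j := by
    intro r hr j
    have hne : S.Nonempty := ⟨r, hr⟩
    have h := hSrep r hr hne.choose hne.choose_spec
    rw [hr₀def, dif_pos hne]
    exact congrFun h j
  -- column counts
  have hcol : ∀ (j : Fin k) (x : Fin n),
      (Finset.univ.filter fun r => A r j = x).card = lam * n := by
    intro j x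
    obtain ⟨j', hj'⟩ := Fintype.exists_ne_of_one_lt_card (by rw [Fintype.card_fin]; omega) j
    rw [Finset.card_eq_sum_card_fiberwise (f := fun r => A r j')
        (t := Finset.univ) (fun r _ => Finset.mem_univ _)]
    have h1 : ∀ y : Fin n, ((Finset.univ.filter fun r => A r j = x).filter
        fun r => A r j' = y).card = lam := by
      intro y
      rw [Finset.filter_filter]
      exact hOA j j' (Ne.symm hj') x y
    simp only [h1, Finset.sum_const, Finset.card_univ, Fintype.card_fin, smul_eq_mul]
    exact Nat.mul_comm n lam
  -- splitting counts over S and Sᶜ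
  have hsplit : ∀ (P : Fin (lam * n ^ 2) → Prop) [DecidablePred P],
      (Finset.univ.filter P).card = (S.filter P).card + (Sᶜ.filter P).card := by
    intro P _
    rw [← Finset.card_union_of_disjoint
        (Finset.disjoint_filter_filter disjoint_compl_right),
      ← Finset.filter_union, Finset.union_compl]
  -- single-column counts over Sᶜ
  have hc1 : ∀ j : Fin k,
      m + (Sᶜ.filter fun r => A r j = A r₀ j).card = lam * n := by
    intro j
    have h := hsplit (fun r => A r j = A r₀ j)
    rw [hcol] at h
    have hS' : S.filter (fun r => A r j = A r₀ j) = S :=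
      Finset.filter_true_of_mem (fun r hr => hSρ r hr j)
    rw [hS', hScard] at h
    omega
  -- pair counts over Sᶜ
  have hc2 : ∀ j j' : Fin k, j ≠ j' →
      m + (Sᶜ.filter fun r => A r j = A r₀ j ∧ A r j' = A r₀ j').card = lam := by
    intro j j' hjj'
    have h := hsplit (fun r => A r j = A r₀ j ∧ A r j' = A r₀ j')
    rw [hOA j j' hjj'] at h
    have hS' : S.filter (fun r => A r j = A r₀ j ∧ A r j' = A r₀ j') = S :=
      Finset.filter_true_of_mem (fun r hr => ⟨hSρ r hr j, hSρ r hr j'⟩)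
    rw [hS', hScard] at h
    omega
  have hm1 : m ≤ lam * n := le_of_le_of_eq (Nat.le_add_right m _) (hc1 ⟨0, by omega⟩)
  have hm2 : m ≤ lam := le_of_le_of_eq (Nat.le_add_right m _)
    (hc2 ⟨0, by omega⟩ ⟨1, by omega⟩ (by simp [Fin.ext_iff]))
  have hmN : m ≤ lam * n ^ 2 := hScard ▸ le_trans (Finset.card_le_univ S)
    (by simp)
  set d : Fin (lam * n ^ 2) → ℕ := fun r => (Finset.univ.filter fun j => A r j = A r₀ j).card
    with hd
  -- sum of d over Sᶜ
  have hdsum : ∑ r ∈ Sᶜ, d r = k * (lam * n - m) := by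
    have h1 : ∑ r ∈ Sᶜ, d r
        = ∑ j : Fin k, (Sᶜ.filter fun r => A r j = A r₀ j).card := by
      simp only [hd, Finset.card_filter]
      rw [Finset.sum_comm]
    rw [h1]
    have h2 : ∀ j : Fin k, (Sᶜ.filter fun r => A r j = A r₀ j).card = lam * n - m := by
      intro j; have := hc1 j; omega
    simp only [h2, Finset.sum_const, Finset.card_univ, Fintype.card_fin, smul_eq_mul]
  -- sum of d² over Sᶜ
  have hdsq : ∑ r ∈ Sᶜ, d r ^ 2
      = k * ((lam * n - m) + (k - 1) * (lam - m)) := by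
    have hite : ∀ (p q : Prop) [Decidable p] [Decidable q],
        (if p then (1 : ℕ) else 0) * (if q then 1 else 0) = if p ∧ q then 1 else 0 := by
      intro p q _ _
      split_ifs <;> simp_all
    have h1 : ∀ r, d r ^ 2 = ∑ j : Fin k, ∑ j' : Fin k,
        if A r j = A r₀ j ∧ A r j' = A r₀ j' then 1 else 0 := by
      intro r
      simp only [hd, Finset.card_filter, sq, Finset.sum_mul_sum, hite]
    have h2 : ∑ r ∈ Sᶜ, d r ^ 2 = ∑ j : Fin k, ∑ j' : Fin k,
        (Sᶜ.filter fun r => A r j = A r₀ j ∧ A r j' = A r₀ j').card := by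
      simp only [h1, Finset.card_filter]
      rw [Finset.sum_comm]
      exact Finset.sum_congr rfl fun j _ => Finset.sum_comm
    rw [h2]
    have h3 : ∀ j : Fin k, ∑ j' : Fin k,
        (Sᶜ.filter fun r => A r j = A r₀ j ∧ A r j' = A r₀ j').card
        = (lam * n - m) + (k - 1) * (lam - m) := by
      intro j
      rw [← Finset.add_sum_erase _ _ (Finset.mem_univ j)]
      congr 1
      · simp only [and_self]
        have := hc1 j; omega
      · have h4 : ∀ j' ∈ Finset.univ.erase j,
            (Sᶜ.filter fun r => A r j = A r₀ j ∧ A r j' = A r₀ j').card = lam - m := by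
          intro j' hj'
          have hne : j ≠ j' := (Finset.ne_of_mem_erase hj').symm
          have := hc2 j j' hne; omega
        rw [Finset.sum_congr rfl h4]
        simp [Finset.card_erase_of_mem, mul_comm]
    simp only [h3, Finset.sum_const, Finset.card_univ, Fintype.card_fin, smul_eq_mul]
  have hTcard : (Sᶜ).card = lam * n ^ 2 - m := by
    rw [Finset.card_compl, hScard]; simp
  -- Cauchy–Schwarz
  have hCS : ((∑ r ∈ Sᶜ, (d r : ℤ)) ^ 2) ≤ (Sᶜ).card * ∑ r ∈ Sᶜ, (d r : ℤ) ^ 2 :=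
    sq_sum_le_card_mul_sum_sq
  have hsumZ : (∑ r ∈ Sᶜ, (d r : ℤ)) = (k : ℤ) * ((lam : ℤ) * n - m) := by
    rw [← Nat.cast_sum]
    rw [hdsum]
    push_cast [hm1]
    ring
  have hsqZ : (∑ r ∈ Sᶜ, (d r : ℤ) ^ 2)
      = (k : ℤ) * (((lam : ℤ) * n - m) + ((k : ℤ) - 1) * ((lam : ℤ) - m)) := by
    have : (∑ r ∈ Sᶜ, (d r : ℤ) ^ 2) = ((∑ r ∈ Sᶜ, d r ^ 2 : ℕ) : ℤ) := by push_cast; rfl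
    rw [this, hdsq]
    push_cast [hm1, hm2, (by omega : 1 ≤ k)]
    ring
  rw [hsumZ, hsqZ, hTcard] at hCS
  have hTZ : ((lam * n ^ 2 - m : ℕ) : ℤ) = (lam : ℤ) * n ^ 2 - m := by
    push_cast [hmN]; ring
  rw [hTZ] at hCS
  have hk0 : (0 : ℤ) < k := by exact_mod_cast (by omega : 0 < k)
  have h : (k : ℤ) * ((k : ℤ) * ((lam : ℤ) * n - m) ^ 2)
      ≤ (k : ℤ) * (((lam : ℤ) * n ^ 2 - m) *
        ((k : ℤ) * ((lam : ℤ) - m) + (lam : ℤ) * ((n : ℤ) - 1))) := by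
    have e1 : (k : ℤ) * ((k : ℤ) * ((lam : ℤ) * n - m) ^ 2)
        = ((k : ℤ) * ((lam : ℤ) * n - m)) ^ 2 := by ring
    have e2 : (k : ℤ) * (((lam : ℤ) * n ^ 2 - m) *
          ((k : ℤ) * ((lam : ℤ) - m) + (lam : ℤ) * ((n : ℤ) - 1)))
        = ((lam : ℤ) * n ^ 2 - m) *
          ((k : ℤ) * (((lam : ℤ) * n - m) + ((k : ℤ) - 1) * ((lam : ℤ) - m))) := by ring
    rw [e1, e2]; exact hCS
  exact le_of_mul_le_mul_left h hk0
end

section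
/- Let A be an orthogonal array OA_λ(k,n) (k ≥ 2, n ≥ 2, λ ≥ 1) with symbol set ℤ/nℤ and N = λn² rows, and let ω = e^{2πi/n} ∈ ℂ. For 1 ≤ s ≤ n−1 and column index j, let v_{s,j} ∈ ℂ^N be the vector whose r-th entry is ω^{s·A(r,j)}, and let v₀ ∈ ℂ^N be the all-ones vector. Then the 1 + k(n−1) vectors v₀ together with all v_{s,j} (1 ≤ s ≤ n−1, 1 ≤ j ≤ k) are pairwise orthogonal with respect to the Hermitian inner product on ℂ^N, and consequently 1 + k(n−1) ≤ λn². -/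
open Finset

/-- Sum of a composite as a weighted sum over fibers. -/
lemma sum_comp_count {α β : Type*} [Fintype α] [Fintype β] [DecidableEq β]
    (φ : α → β) (g : β → ℂ) :
    ∑ a, g (φ a) = ∑ b, ((Finset.univ.filter fun a => φ a = b).card : ℂ) * g b := by
  rw [← Finset.sum_fiberwise' (Finset.univ : Finset α) φ g]
  refine Finset.sum_congr rfl fun b _ => ?_
  rw [Finset.sum_const, nsmul_eq_mul]

/-- Geometric-sum vanishing over `ZMod n`. -/
lemma sum_zmod_pow_eq_zero {n : ℕ} [NeZero n] (ζ : ℂ) (hζn : ζ ^ n = 1) (hζ : ζ ≠ 1) :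
    ∑ x : ZMod n, ζ ^ x.val = 0 := by
  have h1 : ∑ x : ZMod n, ζ ^ x.val = ∑ i ∈ Finset.range n, ζ ^ i := by
    refine Finset.sum_nbij' (fun x => x.val) (fun i => (i : ZMod n)) ?_ ?_ ?_ ?_ ?_
    · intro a _; exact Finset.mem_range.mpr (ZMod.val_lt a)
    · intro a _; exact Finset.mem_univ _
    · intro a _; show ((a.val : ℕ) : ZMod n) = a; rw [ZMod.natCast_val, ZMod.cast_id]
    · intro a ha; exact ZMod.val_cast_of_lt (Finset.mem_range.mp ha)
    · intro a _; rfl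
  rw [h1, geom_sum_eq hζ, hζn, sub_self, zero_div]

/-- Orthogonal-vectors proof of the Plackett-Burman bound: for an OA_λ(k,n) over ℤ/nℤ,
with ω = e^{2πi/n}, the vectors v_{s,j} (r ↦ ω^{s·A(r,j)}) for 1 ≤ s ≤ n−1 together with
the all-ones vector v₀ are pairwise orthogonal in ℂ^N, and hence 1 + k(n−1) ≤ λn². -/
theorem oa_orthogonal_vectors (k n lam : ℕ) (hk : 2 ≤ k) (hn : 2 ≤ n) (hlam : 1 ≤ lam)
    (A : Fin (lam * n ^ 2) → Fin k → ZMod n)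
    (hOA : ∀ j j' : Fin k, j ≠ j' → ∀ x y : ZMod n,
      (Finset.univ.filter (fun r => A r j = x ∧ A r j' = y)).card = lam)
    (ω : ℂ) (hω : ω = Complex.exp (2 * Real.pi * Complex.I / n))
    (v : ℕ → Fin k → Fin (lam * n ^ 2) → ℂ)
    (hv : ∀ s j r, v s j r = ω ^ (s * (A r j).val))
    (v₀ : Fin (lam * n ^ 2) → ℂ) (hv₀ : ∀ r, v₀ r = 1) :
    (∀ s ∈ Finset.Icc 1 (n - 1), ∀ j : Fin k,
      (∑ r, v s j r * (starRingEnd ℂ) (v₀ r)) = 0) ∧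
    (∀ s ∈ Finset.Icc 1 (n - 1), ∀ s' ∈ Finset.Icc 1 (n - 1), ∀ j j' : Fin k,
      (s, j) ≠ (s', j') → (∑ r, v s j r * (starRingEnd ℂ) (v s' j' r)) = 0) ∧
    1 + k * (n - 1) ≤ lam * n ^ 2 := by
  have hn0 : (0:ℕ) < n := by omega
  have hprim : IsPrimitiveRoot ω n := by
    rw [hω]; exact Complex.isPrimitiveRoot_exp n hn0.ne'
  have hω0 : ω ≠ 0 := by
    rw [hω]; exact Complex.exp_ne_zero _
  have hωn : ω ^ n = 1 := hprim.pow_eq_one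
  have hconj : (starRingEnd ℂ) ω = ω⁻¹ := by
    have habs : ‖ω‖ = 1 := by
      rw [hω, Complex.norm_exp]
      have : (2 * Real.pi * Complex.I / n).re = 0 := by
        simp [Complex.div_re]
      rw [this, Real.exp_zero]
    rw [← Complex.inv_eq_conj habs]
  haveI : NeZero n := ⟨hn0.ne'⟩
  -- counting in a single column
  have hcol : ∀ (j : Fin k) (x : ZMod n),
      (Finset.univ.filter fun r => A r j = x).card = n * lam := by
    intro j x
    haveI : Nontrivial (Fin k) := Fin.nontrivial_iff_two_le.mpr hk
    obtain ⟨j', hj'⟩ := exists_ne j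
    have h := Finset.card_eq_sum_card_fiberwise
      (f := fun r => A r j') (s := Finset.univ.filter fun r => A r j = x)
      (t := Finset.univ) (fun r _ => Finset.mem_univ _)
    rw [h]
    have : ∀ y ∈ (Finset.univ : Finset (ZMod n)),
        ((Finset.univ.filter fun r => A r j = x).filter fun r => A r j' = y).card = lam := by
      intro y _
      rw [Finset.filter_filter]
      exact hOA j j' (Ne.symm hj') x y
    rw [Finset.sum_congr rfl this, Finset.sum_const, Finset.card_univ, ZMod.card, smul_eq_mul]
  -- single-column sum vanishes
  have hsum1 : ∀ s, 1 ≤ s → s ≤ n - 1 → ∀ j : Fin k,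
      ∑ r, (ω ^ s) ^ (A r j).val = 0 := by
    intro s hs1 hs2 j
    have := sum_comp_count (fun r => A r j) (fun x => (ω ^ s) ^ x.val)
    rw [this]
    have hcongr : ∀ x ∈ (Finset.univ : Finset (ZMod n)),
        ((Finset.univ.filter fun r => A r j = x).card : ℂ) * (ω ^ s) ^ x.val
          = (n * lam : ℂ) * (ω ^ s) ^ x.val := by
      intro x _; rw [hcol j x]; push_cast; ring
    have hzero := sum_zmod_pow_eq_zero (ω ^ s)
      (by rw [← pow_mul, Nat.mul_comm s n, pow_mul, hωn, one_pow])
      (hprim.pow_ne_one_of_pos_of_lt (by omega) (by omega))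
    rw [Finset.sum_congr rfl hcongr, ← Finset.mul_sum, hzero, mul_zero]
  -- part 1
  have part1 : ∀ s ∈ Finset.Icc 1 (n - 1), ∀ j : Fin k,
      (∑ r, v s j r * (starRingEnd ℂ) (v₀ r)) = 0 := by
    intro s hs j
    rw [Finset.mem_Icc] at hs
    have : ∀ r, v s j r * (starRingEnd ℂ) (v₀ r) = (ω ^ s) ^ (A r j).val := by
      intro r; rw [hv, hv₀, map_one, mul_one, pow_mul]
    rw [Finset.sum_congr rfl fun r _ => this r]
    exact hsum1 s hs.1 hs.2 j
  have part2 : ∀ s ∈ Finset.Icc 1 (n - 1), ∀ s' ∈ Finset.Icc 1 (n - 1), ∀ j j' : Fin k,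
      (s, j) ≠ (s', j') → (∑ r, v s j r * (starRingEnd ℂ) (v s' j' r)) = 0 := by
    intro s hs s' hs' j j' hne
    rw [Finset.mem_Icc] at hs hs'
    have hterm : ∀ r, v s j r * (starRingEnd ℂ) (v s' j' r)
        = (ω ^ s) ^ (A r j).val * ((ω ^ s')⁻¹) ^ (A r j').val := by
      intro r
      rw [hv, hv, map_pow, hconj, pow_mul, pow_mul, inv_pow]
    rw [Finset.sum_congr rfl fun r _ => hterm r]
    by_cases hjj : j = j'
    · -- same column, s ≠ s'
      subst hjj
      have hss' : s ≠ s' := fun h => hne (by rw [h])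
      set ζ : ℂ := ω ^ s * (ω ^ s')⁻¹ with hζdef
      have hterm2 : ∀ r, (ω ^ s) ^ (A r j).val * ((ω ^ s')⁻¹) ^ (A r j).val
          = ζ ^ (A r j).val := by intro r; rw [hζdef, mul_pow]
      rw [Finset.sum_congr rfl fun r _ => hterm2 r]
      have hζz : ζ = ω ^ ((s : ℤ) - (s' : ℤ)) := by
        rw [hζdef, zpow_sub₀ hω0, zpow_natCast, zpow_natCast, div_eq_mul_inv]
      have hζn : ζ ^ n = 1 := by
        rw [hζz, ← zpow_natCast (ω ^ ((s:ℤ) - s')) n, ← zpow_mul, mul_comm, zpow_mul,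
          zpow_natCast, hωn, one_zpow]
      have hζ1 : ζ ≠ 1 := by
        rw [hζz]
        intro h
        rw [hprim.zpow_eq_one_iff_dvd] at h
        have h0 : (s : ℤ) - (s' : ℤ) = 0 := by
          refine Int.eq_zero_of_dvd_of_natAbs_lt_natAbs h ?_
          have hs1 := hs.1; have hs2 := hs.2; have hs'1 := hs'.1; have hs'2 := hs'.2
          rw [Int.natAbs_natCast]
          omega
        exact hss' (by omega)
      rw [sum_comp_count (fun r => A r j) (fun x => ζ ^ x.val)]
      have hcongr : ∀ x ∈ (Finset.univ : Finset (ZMod n)),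
          ((Finset.univ.filter fun r => A r j = x).card : ℂ) * ζ ^ x.val
            = (n * lam : ℂ) * ζ ^ x.val := by
        intro x _; rw [hcol j x]; push_cast; ring
      rw [Finset.sum_congr rfl hcongr, ← Finset.mul_sum,
        sum_zmod_pow_eq_zero ζ hζn hζ1, mul_zero]
    · -- different columns: product of two vanishing sums
      have := sum_comp_count (fun r => (A r j, A r j'))
        (fun p => (ω ^ s) ^ p.1.val * ((ω ^ s')⁻¹) ^ p.2.val)
      rw [this]
      have hcongr : ∀ p ∈ (Finset.univ : Finset (ZMod n × ZMod n)),
          ((Finset.univ.filter fun r => (A r j, A r j') = p).card : ℂ)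
            * ((ω ^ s) ^ p.1.val * ((ω ^ s')⁻¹) ^ p.2.val)
          = (lam : ℂ) * ((ω ^ s) ^ p.1.val * ((ω ^ s')⁻¹) ^ p.2.val) := by
        intro p _
        have : (Finset.univ.filter fun r => (A r j, A r j') = p)
            = (Finset.univ.filter fun r => A r j = p.1 ∧ A r j' = p.2) := by
          apply Finset.filter_congr; intro r _; simp [Prod.ext_iff]
        rw [this, hOA j j' hjj p.1 p.2]
      have hfact : (∑ p : ZMod n × ZMod n, (ω ^ s) ^ p.1.val * ((ω ^ s')⁻¹) ^ p.2.val)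
          = (∑ x : ZMod n, (ω ^ s) ^ x.val) * (∑ y : ZMod n, ((ω ^ s')⁻¹) ^ y.val) := by
        calc (∑ p : ZMod n × ZMod n, (ω ^ s) ^ p.1.val * ((ω ^ s')⁻¹) ^ p.2.val)
            = ∑ x : ZMod n, ∑ y : ZMod n, (ω ^ s) ^ x.val * ((ω ^ s')⁻¹) ^ y.val :=
              Fintype.sum_prod_type _
          _ = _ := (Finset.sum_mul_sum _ _ _ _).symm
      have hz := sum_zmod_pow_eq_zero (ω ^ s)
        (by rw [← pow_mul, Nat.mul_comm s n, pow_mul, hωn, one_pow])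
        (hprim.pow_ne_one_of_pos_of_lt (by omega) (by omega))
      rw [Finset.sum_congr rfl hcongr, ← Finset.mul_sum, hfact, hz, zero_mul, mul_zero]
  refine ⟨part1, part2, ?_⟩
  -- the dimension bound
  have hN : 0 < lam * n ^ 2 := by positivity
  set w : Option (Fin (n - 1) × Fin k) → EuclideanSpace ℂ (Fin (lam * n ^ 2)) :=
    fun i => Option.elim i (WithLp.toLp 2 v₀) (fun p => WithLp.toLp 2 (v (p.1.val + 1) p.2)) with hw
  have hmem : ∀ p : Fin (n - 1) × Fin k, (p.1.val + 1) ∈ Finset.Icc 1 (n - 1) := by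
    intro p; rw [Finset.mem_Icc]; have := p.1.isLt; omega
  have hwne : ∀ i, w i ≠ 0 := by
    intro i h
    have h0 : w i ⟨0, hN⟩ = 0 := by rw [h]; rfl
    cases i with
    | none => rw [hw] at h0; simp only [Option.elim, PiLp.toLp_apply] at h0; rw [hv₀] at h0; exact one_ne_zero h0
    | some p =>
      rw [hw] at h0; simp only [Option.elim, PiLp.toLp_apply] at h0; rw [hv] at h0
      exact pow_ne_zero _ hω0 h0
  have hS : ∀ i i', i ≠ i' → (∑ r, w i r * (starRingEnd ℂ) (w i' r)) = 0 := by
    intro i i' hne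
    cases i with
    | none =>
      cases i' with
      | none => exact absurd rfl hne
      | some p =>
        have h := part1 (p.1.val + 1) (hmem p) p.2
        have hc : (starRingEnd ℂ)
            (∑ r, v (p.1.val + 1) p.2 r * (starRingEnd ℂ) (v₀ r)) = 0 := by
          rw [h, map_zero]
        rw [map_sum] at hc
        calc ∑ r, w none r * (starRingEnd ℂ) (w (some p) r)
            = ∑ r, (starRingEnd ℂ)
                (v (p.1.val + 1) p.2 r * (starRingEnd ℂ) (v₀ r)) := by
              refine Finset.sum_congr rfl fun r _ => ?_
              simp only [hw, Option.elim, PiLp.toLp_apply, map_mul, Complex.conj_conj]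
              rw [mul_comm]
          _ = 0 := hc
    | some p =>
      cases i' with
      | none =>
        have h := part1 (p.1.val + 1) (hmem p) p.2
        calc ∑ r, w (some p) r * (starRingEnd ℂ) (w none r)
            = ∑ r, v (p.1.val + 1) p.2 r * (starRingEnd ℂ) (v₀ r) := rfl
          _ = 0 := h
      | some p' =>
        have hpp : ((p.1.val + 1 : ℕ), p.2) ≠ ((p'.1.val + 1 : ℕ), p'.2) := by
          intro h
          apply hne
          rw [Prod.mk.injEq] at h
          rw [show p = p' from Prod.ext (Fin.ext (by omega)) h.2]
        exact part2 _ (hmem p) _ (hmem p') p.2 p'.2 hpp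
  have horth : Pairwise fun i i' => (inner ℂ (w i) (w i') : ℂ) = 0 := by
    intro i i' hne
    rw [PiLp.inner_apply]
    simp only [RCLike.inner_apply']
    rw [show (∑ r, (starRingEnd ℂ) (w i r) * w i' r)
        = ∑ r, w i' r * (starRingEnd ℂ) (w i r) from
      Finset.sum_congr rfl fun r _ => mul_comm _ _]
    exact hS i' i hne.symm
  have hli : LinearIndependent ℂ w :=
    linearIndependent_of_ne_zero_of_inner_eq_zero hwne horth
  have hcard := hli.fintype_card_le_finrank
  rw [finrank_euclideanSpace_fin] at hcard
  simp only [Fintype.card_option, Fintype.card_prod, Fintype.card_fin] at hcard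
  calc 1 + k * (n - 1) = (n - 1) * k + 1 := by ring
    _ ≤ lam * n ^ 2 := hcard
end

section
/- Let k ≥ 2, n ≥ 2, λ ≥ 1 and t ≥ 2 be integers with t even. If there exists an orthogonal array OA_λ(t,k,n) of strength t, then λn^t ≥ 1 + Σ_{i=1}^{t/2} C(k,i)(n−1)^i, where C(k,i) denotes the binomial coefficient. -/
open Finset


lemma card_supp_eq (k n : ℕ) [NeZero n] (s : Finset (Fin k)) :
    (Finset.univ.filter (fun g : Fin k → Fin n =>
      Finset.univ.filter (fun i => g i ≠ 0) = s)).card = (n-1) ^ s.card := by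
  have heq : (Finset.univ.filter (fun g : Fin k → Fin n =>
      Finset.univ.filter (fun i => g i ≠ 0) = s))
      = Fintype.piFinset (fun i : Fin k =>
          if i ∈ s then (Finset.univ : Finset (Fin n)).erase 0 else {0}) := by
    ext g
    simp only [mem_filter, mem_univ, true_and, Fintype.mem_piFinset]
    constructor
    · intro h i
      by_cases hi : i ∈ s
      · have : g i ≠ 0 := by
          have : i ∈ Finset.univ.filter (fun i => g i ≠ 0) := h ▸ hi
          simpa using this
        simp [hi, this]
      · have : g i = 0 := by
          by_contra hc
          exact hi (h ▸ (by simpa using hc : i ∈ Finset.univ.filter (fun i => g i ≠ 0)))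
        simp [hi, this]
    · intro h
      ext i
      simp only [mem_filter, mem_univ, true_and]
      by_cases hi : i ∈ s
      · have := h i; simp only [if_pos hi, mem_erase, mem_univ, and_true] at this
        exact ⟨fun _ => hi, fun _ => this⟩
      · have := h i; simp only [if_neg hi, mem_singleton] at this
        simp [this, hi]
  rw [heq, Fintype.card_piFinset]
  rw [← Finset.prod_filter_mul_prod_filter_not Finset.univ (fun i => i ∈ s)]
  have h1 : ∀ i ∈ Finset.univ.filter (fun i : Fin k => i ∈ s),
      (if i ∈ s then (Finset.univ : Finset (Fin n)).erase 0 else {0}).card = n - 1 := by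
    intro i hi
    simp only [mem_filter] at hi
    simp [if_pos hi.2, Finset.card_erase_of_mem]
  have h2 : ∀ i ∈ Finset.univ.filter (fun i : Fin k => i ∉ s),
      (if i ∈ s then (Finset.univ : Finset (Fin n)).erase 0 else ({0} : Finset (Fin n))).card = 1 := by
    intro i hi
    simp only [mem_filter] at hi
    simp [if_neg hi.2]
  rw [Finset.prod_congr rfl h1, Finset.prod_congr rfl h2, Finset.prod_const,
    Finset.prod_const, one_pow, mul_one]
  congr 1
  simp [Finset.filter_mem_eq_inter]

lemma card_bounded_supp (k n m : ℕ) [NeZero n] :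
    (Finset.univ.filter (fun g : Fin k → Fin n =>
      (Finset.univ.filter (fun i => g i ≠ 0)).card ≤ m)).card
    = ∑ i ∈ Finset.range (m+1), Nat.choose k i * (n - 1) ^ i := by
  rw [Finset.card_eq_sum_card_fiberwise (f := fun g : Fin k → Fin n =>
        Finset.univ.filter (fun i => g i ≠ 0))
      (t := (Finset.univ : Finset (Fin k)).powerset.filter (fun s => s.card ≤ m))
      (by intro g hg; simp only [Finset.mem_coe, mem_filter, mem_univ, true_and] at hg ⊢
          exact ⟨Finset.mem_powerset.2 (Finset.subset_univ _), hg⟩)]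
  have key : ∀ s ∈ (Finset.univ : Finset (Fin k)).powerset.filter (fun s => s.card ≤ m),
      ((Finset.univ.filter (fun g : Fin k → Fin n =>
        (Finset.univ.filter (fun i => g i ≠ 0)).card ≤ m)).filter
        (fun g => Finset.univ.filter (fun i => g i ≠ 0) = s)).card = (n-1)^s.card := by
    intro s hs
    simp only [mem_filter, Finset.mem_powerset] at hs
    rw [Finset.filter_filter]
    rw [← card_supp_eq k n s]
    congr 1
    apply Finset.filter_congr
    intro g _
    constructor
    · rintro ⟨_, h⟩; exact h
    · intro h; exact ⟨by rw [h]; exact hs.2, h⟩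
  rw [Finset.sum_congr rfl key]
  rw [← Finset.sum_fiberwise_of_maps_to (g := fun s : Finset (Fin k) => s.card)
      (t := Finset.range (m+1))
      (by intro s hs; simp only [mem_filter] at hs; simpa [Nat.lt_succ_iff] using hs.2)]
  apply Finset.sum_congr rfl
  intro i hi
  simp only [Finset.mem_range, Nat.lt_succ_iff] at hi
  have hT : (((Finset.univ : Finset (Fin k)).powerset.filter (fun s => s.card ≤ m)).filter
      (fun s => s.card = i)) = Finset.powersetCard i (Finset.univ : Finset (Fin k)) := by
    ext s
    simp only [mem_filter, Finset.mem_powerset, Finset.mem_powersetCard]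
    constructor
    · rintro ⟨⟨h1, _⟩, h3⟩; exact ⟨h1, h3⟩
    · rintro ⟨h1, h2⟩; exact ⟨⟨h1, h2 ▸ hi⟩, h2⟩
  rw [hT]
  rw [Finset.sum_congr rfl (fun s hs => by
    rw [(Finset.mem_powersetCard.1 hs).2])]
  rw [Finset.sum_const, Finset.card_powersetCard, Finset.card_univ, Fintype.card_fin,
    smul_eq_mul]


lemma sum_choose_le (k n M : ℕ) (hn : 1 ≤ n) :
    ∑ i ∈ Finset.range M, Nat.choose k i * (n - 1) ^ i ≤ n ^ k := by
  have h1 : ∑ i ∈ Finset.range M, Nat.choose k i * (n - 1) ^ i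
      ≤ ∑ i ∈ Finset.range (max M (k+1)), Nat.choose k i * (n - 1) ^ i :=
    Finset.sum_le_sum_of_subset (Finset.range_subset_range.2 (le_max_left _ _))
  have h2 : ∑ i ∈ Finset.range (max M (k+1)), Nat.choose k i * (n - 1) ^ i
      = ∑ i ∈ Finset.range (k+1), Nat.choose k i * (n - 1) ^ i := by
    apply (Finset.sum_subset (Finset.range_subset_range.2 (le_max_right _ _)) _).symm
    intro i _ hi
    simp only [Finset.mem_range, not_lt] at hi
    rw [Nat.choose_eq_zero_of_lt (by omega), zero_mul]
  have h3 : ∑ i ∈ Finset.range (k+1), Nat.choose k i * (n - 1) ^ i = n ^ k := by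
    have hb := add_pow (n-1) 1 k
    simp only [one_pow, mul_one] at hb
    rw [show n ^ k = ((n-1)+1) ^ k by rw [Nat.sub_add_cancel hn], hb]
    exact Finset.sum_congr rfl fun i _ => mul_comm _ _
  omega

lemma char_sum_zero (z : ℂ) (n : ℕ) (hzn : z ^ n = 1) (hz : z ≠ 1) :
    ∑ a ∈ Finset.range n, z ^ a = 0 := by
  rw [geom_sum_eq hz, hzn, sub_self, zero_div]

lemma row_sum (k n lam t N : ℕ) (A : Fin N → Fin k → Fin n)
    (c : Fin t → Fin k)
    (hOA : ∀ x : Fin t → Fin n,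
      (Finset.univ.filter (fun r => ∀ i, A r (c i) = x i)).card = lam)
    (F : (Fin t → Fin n) → ℂ) :
    ∑ r, F (fun j => A r (c j)) = lam * ∑ x : Fin t → Fin n, F x := by
  rw [← Finset.sum_fiberwise_of_maps_to (g := fun r => fun j => A r (c j))
      (t := (Finset.univ : Finset (Fin t → Fin n))) (fun r _ => Finset.mem_univ _)]
  rw [Finset.mul_sum]
  apply Finset.sum_congr rfl
  intro x _
  rw [Finset.sum_congr rfl (fun r hr => by
    rw [(Finset.mem_filter.1 hr).2])]
  rw [Finset.sum_const, nsmul_eq_mul]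
  congr 1
  rw [← hOA x]
  norm_cast
  congr 1
  apply Finset.filter_congr
  intro r _
  simp [funext_iff]

lemma inner_prod (k n lam t N : ℕ) [NeZero n] (hn : 2 ≤ n) (hkt : t ≤ k) (hN : N = lam * n ^ t)
    (A : Fin N → Fin k → Fin n)
    (hrow : ∀ (c : Fin t → Fin k), Function.Injective c → ∀ F : (Fin t → Fin n) → ℂ,
      ∑ r, F (fun j => A r (c j)) = (lam : ℂ) * ∑ x : Fin t → Fin n, F x)
    (ω : ℂ) (hω : IsPrimitiveRoot ω n)
    (g h : Fin k → Fin n)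
    (hgh : (Finset.univ.filter (fun i => g i ≠ 0)).card
         + (Finset.univ.filter (fun i => h i ≠ 0)).card ≤ t) :
    ∑ r, ((∏ i, ω ^ ((g i).val * (A r i).val)) * (∏ i, ω ^ ((n - (h i).val) * (A r i).val)))
      = if g = h then (N : ℂ) else 0 := by
  have hn0 : 0 < n := by omega
  set s : Finset (Fin k) := Finset.univ.filter (fun i => g i ≠ 0)
      ∪ Finset.univ.filter (fun i => h i ≠ 0) with hs
  have hscard : s.card ≤ t := le_trans (Finset.card_union_le _ _) hgh
  obtain ⟨s', hss', hs'card⟩ := Finset.exists_superset_card_eq hscard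
      (by simpa using hkt)
  let e := Finset.equivFinOfCardEq hs'card
  let c : Fin t → Fin k := fun j => (e.symm j : Fin k)
  have hc : Function.Injective c :=
    fun a b hab => e.symm.injective (Subtype.ext hab)
  have hcmem : ∀ j, c j ∈ s' := fun j => (e.symm j).2
  have hcover : ∀ i ∈ s', ∃ j, c j = i := by
    intro i hi
    exact ⟨e ⟨i, hi⟩, by simp [c]⟩
  set E : Fin k → ℕ := fun i => (g i).val + (n - (h i).val) with hE
  have hEout : ∀ i ∉ s', E i = n := by
    intro i hi
    have hig : g i = 0 := by
      by_contra hcon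
      exact hi (hss' (Finset.mem_union_left _ (by simp [hcon])))
    have hih : h i = 0 := by
      by_contra hcon
      exact hi (hss' (Finset.mem_union_right _ (by simp [hcon])))
    simp only [hE, hig, hih, Fin.val_zero]
    omega
  have hsummand : ∀ r, (∏ i, ω ^ ((g i).val * (A r i).val))
      * (∏ i, ω ^ ((n - (h i).val) * (A r i).val))
      = ∏ j : Fin t, ω ^ (E (c j) * (A r (c j)).val) := by
    intro r
    rw [← Finset.prod_mul_distrib]
    have h1 : ∀ i : Fin k, ω ^ ((g i).val * (A r i).val) * ω ^ ((n - (h i).val) * (A r i).val)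
        = ω ^ (E i * (A r i).val) := by
      intro i
      rw [← pow_add, hE]
      ring_nf
    simp_rw [h1]
    rw [← Finset.prod_subset (Finset.subset_univ s') (by
      intro i _ hi
      rw [hEout i hi, pow_mul, hω.pow_eq_one, one_pow])]
    have himg : Finset.univ.image c = s' := by
      apply Finset.eq_of_subset_of_card_le
      · intro i hi
        obtain ⟨j, _, rfl⟩ := Finset.mem_image.1 hi
        exact hcmem j
      · rw [Finset.card_image_of_injective _ hc, Finset.card_univ, Fintype.card_fin, hs'card]
    rw [← himg, Finset.prod_image (fun a _ b _ hab => hc hab)]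
  simp_rw [hsummand]
  rw [hrow c hc (fun x => ∏ j : Fin t, ω ^ (E (c j) * (x j).val))]
  rw [← Fintype.piFinset_univ, Finset.sum_prod_piFinset (Finset.univ) (fun j a => ω ^ (E (c j) * (a : Fin n).val))]
  have hfac : ∀ j : Fin t, (∑ a ∈ (Finset.univ : Finset (Fin n)), ω ^ (E (c j) * a.val))
      = if g (c j) = h (c j) then (n : ℂ) else 0 := by
    intro j
    have hrw : ∀ a : Fin n, ω ^ (E (c j) * a.val) = (ω ^ (E (c j))) ^ a.val := by
      intro a; rw [pow_mul]
    simp_rw [hrw]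
    rw [Fin.sum_univ_eq_sum_range (fun a => (ω ^ E (c j)) ^ a) n]
    by_cases hgh' : g (c j) = h (c j)
    · have hv := congrArg Fin.val hgh'
      have hlt := (h (c j)).isLt
      have hEn : E (c j) = n := by simp only [hE]; omega
      rw [if_pos hgh', hEn, hω.pow_eq_one]
      simp
    · rw [if_neg hgh']
      have hz1 : (ω ^ E (c j)) ^ n = 1 := by
        rw [← pow_mul, mul_comm, pow_mul, hω.pow_eq_one, one_pow]
      have hz2 : ω ^ E (c j) ≠ 1 := by
        intro hone
        have h1 := (g (c j)).isLt
        have h2 := (h (c j)).isLt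
        have h3 : (g (c j)).val ≠ (h (c j)).val := fun hc' => hgh' (Fin.ext hc')
        obtain ⟨q, hq⟩ := (hω.pow_eq_one_iff_dvd _).1 hone
        simp only [hE] at hq
        rcases q with _ | _ | q
        · omega
        · omega
        · have h5 : n * 2 ≤ n * (q + 1 + 1) := Nat.mul_le_mul_left n (by omega)
          omega
      rw [geom_sum_eq hz2, hz1, sub_self, zero_div]
  rw [Finset.prod_congr rfl (fun j _ => hfac j)]
  by_cases hgheq : g = h
  · rw [if_pos hgheq]
    have hall : ∀ j : Fin t, (if g (c j) = h (c j) then (n:ℂ) else 0) = (n:ℂ) :=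
      fun j => if_pos (by rw [hgheq])
    rw [Finset.prod_congr rfl (fun j _ => hall j), Finset.prod_const, Finset.card_univ,
      Fintype.card_fin, hN]
    push_cast
    ring
  · rw [if_neg hgheq]
    obtain ⟨i, hi⟩ : ∃ i, g i ≠ h i := by
      by_contra hcon
      push_neg at hcon
      exact hgheq (funext hcon)
    have his' : i ∈ s' := by
      apply hss'
      by_cases hgi : g i = 0
      · apply Finset.mem_union_right
        simp only [mem_filter, mem_univ, true_and]
        exact fun hh0 => hi (hgi.trans hh0.symm)
      · exact Finset.mem_union_left _ (by simp [hgi])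
    obtain ⟨j, hj⟩ := hcover i his'
    rw [Finset.prod_eq_zero (Finset.mem_univ j) (by rw [hj, if_neg hi])]
    ring

/-- Rao bound, even strength: if an OA_λ(t,k,n) of even strength t exists
(k ≥ 2, n ≥ 2, λ ≥ 1, t ≥ 2), then λn^t ≥ 1 + Σ_{i=1}^{t/2} C(k,i)(n−1)^i. -/
theorem rao_bound_even (k n lam t : ℕ) (hk : 2 ≤ k) (hn : 2 ≤ n) (hlam : 1 ≤ lam)
    (ht : 2 ≤ t) (hteven : Even t)
    (A : Fin (lam * n ^ t) → Fin k → Fin n)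
    (hOA : ∀ c : Fin t → Fin k, Function.Injective c → ∀ x : Fin t → Fin n,
      (Finset.univ.filter (fun r => ∀ i, A r (c i) = x i)).card = lam) :
    1 + ∑ i ∈ Finset.Icc 1 (t / 2), Nat.choose k i * (n - 1) ^ i ≤ lam * n ^ t := by
  haveI : NeZero n := ⟨by omega⟩
  set m := t / 2 with hm
  have htm : m + m = t := by
    obtain ⟨u, hu⟩ := hteven; omega
  have hgoal_eq : 1 + ∑ i ∈ Finset.Icc 1 m, Nat.choose k i * (n - 1) ^ i
      = ∑ i ∈ Finset.range (m+1), Nat.choose k i * (n - 1) ^ i := by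
    have hins : Finset.range (m+1) = insert 0 (Finset.Icc 1 m) := by
      ext x; simp; omega
    rw [hins, Finset.sum_insert (by simp)]
    simp
  rw [hgoal_eq]
  by_cases hkt : t ≤ k
  case neg =>
    -- trivial case: k < t
    calc ∑ i ∈ Finset.range (m+1), Nat.choose k i * (n - 1) ^ i
        ≤ n ^ k := sum_choose_le k n (m+1) (by omega)
      _ ≤ n ^ t := Nat.pow_le_pow_right (by omega) (by omega)
      _ ≤ lam * n ^ t := Nat.le_mul_of_pos_left _ (by omega)
  case pos =>
  set ω : ℂ := Complex.exp (2 * Real.pi * Complex.I / n) with hωdef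
  have hω : IsPrimitiveRoot ω n := Complex.isPrimitiveRoot_exp n (by omega)
  have hrow : ∀ (c : Fin t → Fin k), Function.Injective c → ∀ F : (Fin t → Fin n) → ℂ,
      ∑ r, F (fun j => A r (c j)) = (lam : ℂ) * ∑ x : Fin t → Fin n, F x :=
    fun c hc => row_sum k n lam t (lam * n ^ t) A c (hOA c hc)
  set v : (Fin k → Fin n) → Fin (lam * n ^ t) → ℂ :=
    fun g r => ∏ i, ω ^ ((g i).val * (A r i).val) with hv
  set w : (Fin k → Fin n) → Fin (lam * n ^ t) → ℂ :=
    fun h r => ∏ i, ω ^ ((n - (h i).val) * (A r i).val) with hw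
  have hIP : ∀ g h : Fin k → Fin n,
      (Finset.univ.filter (fun i => g i ≠ 0)).card ≤ m →
      (Finset.univ.filter (fun i => h i ≠ 0)).card ≤ m →
      ∑ r, v g r * w h r = if g = h then ((lam * n ^ t : ℕ) : ℂ) else 0 := by
    intro g h hg hh
    exact inner_prod k n lam t (lam * n ^ t) hn hkt rfl A hrow ω hω g h (by omega)
  -- the index type
  have hli : LinearIndependent ℂ
      (fun b : {g : Fin k → Fin n // (Finset.univ.filter (fun i => g i ≠ 0)).card ≤ m} =>
        v b.val) := by
    rw [Fintype.linearIndependent_iff]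
    intro coef hcoef b
    have h0 : ∀ r : Fin (lam * n ^ t), (∑ b' : {g : Fin k → Fin n //
        (Finset.univ.filter (fun i => g i ≠ 0)).card ≤ m}, coef b' * v b'.val r) = 0 := by
      intro r
      have h1 := congrFun hcoef r
      rw [Finset.sum_apply] at h1
      simpa [smul_eq_mul] using h1
    have hNne : ((lam * n ^ t : ℕ) : ℂ) ≠ 0 := by
      simp only [Nat.cast_ne_zero]
      positivity
    have key : coef b * ((lam * n ^ t : ℕ) : ℂ) = 0 := by
      calc coef b * ((lam * n ^ t : ℕ) : ℂ)
          = ∑ b' : {g : Fin k → Fin n //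
              (Finset.univ.filter (fun i => g i ≠ 0)).card ≤ m},
              coef b' * (if b'.val = b.val then ((lam * n ^ t : ℕ) : ℂ) else 0) := by
            rw [Finset.sum_eq_single b]
            · rw [if_pos rfl]
            · intro b' _ hb'
              rw [if_neg (fun hc => hb' (Subtype.ext hc)), mul_zero]
            · intro hb; exact absurd (Finset.mem_univ b) hb
        _ = ∑ b' : {g : Fin k → Fin n //
              (Finset.univ.filter (fun i => g i ≠ 0)).card ≤ m},
              coef b' * ∑ r, v b'.val r * w b.val r := by
            apply Finset.sum_congr rfl
            intro b' _
            rw [hIP b'.val b.val b'.2 b.2]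
        _ = ∑ b' : {g : Fin k → Fin n //
              (Finset.univ.filter (fun i => g i ≠ 0)).card ≤ m},
              ∑ r, coef b' * (v b'.val r * w b.val r) := by
            simp_rw [Finset.mul_sum]
        _ = ∑ r, ∑ b' : {g : Fin k → Fin n //
              (Finset.univ.filter (fun i => g i ≠ 0)).card ≤ m},
              coef b' * (v b'.val r * w b.val r) := Finset.sum_comm
        _ = ∑ r : Fin (lam * n ^ t), (∑ b' : {g : Fin k → Fin n //
              (Finset.univ.filter (fun i => g i ≠ 0)).card ≤ m},
              coef b' * v b'.val r) * w b.val r := by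
            apply Finset.sum_congr rfl
            intro r _
            rw [Finset.sum_mul]
            apply Finset.sum_congr rfl
            intro b' _
            ring
        _ = 0 := by
            rw [Finset.sum_congr rfl (fun r _ => by rw [h0 r, zero_mul])]
            simp
    exact (mul_eq_zero.1 key).resolve_right hNne
  have hcard := hli.fintype_card_le_finrank
  rw [Module.finrank_fintype_fun_eq_card, Fintype.card_fin] at hcard
  rw [Fintype.card_subtype] at hcard
  rw [card_bounded_supp k n m] at hcard
  exact hcard
end

section
/- Let k ≥ 2, n ≥ 2, λ ≥ 1 and t ≥ 3 be integers with t odd. If there exists an orthogonal array OA_λ(t,k,n) of strength t, then λn^t ≥ 1 + Σ_{i=1}^{(t−1)/2} C(k,i)(n−1)^i + C(k−1,(t−1)/2)(n−1)^{(t+1)/2}, where C(·,·) denotes the binomial coefficient. -/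
open Finset Module
private def osupp {α β : Type*} [Fintype α] [DecidableEq α] [DecidableEq β]
    (g : α → Option β) : Finset α := univ.filter (fun c => g c ≠ none)

section counting
variable {α β : Type*} [Fintype α] [DecidableEq α] [Fintype β] [DecidableEq β]

private def optNeNone : {o : Option β // o ≠ none} ≃ β where
  toFun o := o.1.get (Option.ne_none_iff_isSome.mp o.2)
  invFun b := ⟨some b, by simp⟩
  left_inv o := by cases o with | mk o h => cases o <;> simp_all
  right_inv b := by simp

private lemma card_support_eq (S : Finset α) :
    (univ.filter (fun g : α → Option β => univ.filter (fun c => g c ≠ none) = S)).card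
      = (Fintype.card β) ^ S.card := by
  classical
  rw [← Fintype.card_subtype]
  have e1 : {g : α → Option β // univ.filter (fun c => g c ≠ none) = S}
      ≃ ∀ c : α, {o : Option β // o ≠ none ↔ c ∈ S} := by
    refine (Equiv.subtypeEquivRight ?_).trans (Equiv.subtypePiEquivPi)
    intro g
    rw [Finset.ext_iff]
    simp
  rw [Fintype.card_congr e1, Fintype.card_pi]
  have e2 : ∀ c : α, Fintype.card {o : Option β // o ≠ none ↔ c ∈ S}
      = if c ∈ S then Fintype.card β else 1 := by
    intro c
    by_cases hc : c ∈ S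
    · rw [if_pos hc, Fintype.card_congr (Equiv.subtypeEquivRight (p := fun o => o ≠ none ↔ c ∈ S)
        (q := fun o => o ≠ none) (fun o => by simp [hc]))]
      exact Fintype.card_congr optNeNone
    · rw [if_neg hc, Fintype.card_congr (Equiv.subtypeEquivRight (p := fun o => o ≠ none ↔ c ∈ S)
        (q := fun o => o = none) (fun o => by simp [hc]))]
      exact Fintype.card_subtype_eq none
  rw [Finset.prod_congr rfl (fun c _ => e2 c)]
  rw [Finset.prod_ite_mem, Finset.univ_inter, Finset.prod_const]

private lemma card_support_card_eq (i : ℕ) :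
    (univ.filter (fun g : α → Option β => (univ.filter (fun c => g c ≠ none)).card = i)).card
      = (Fintype.card α).choose i * (Fintype.card β) ^ i := by
  classical
  rw [Finset.card_eq_sum_card_fiberwise
    (f := fun g : α → Option β => univ.filter (fun c => g c ≠ none))
    (t := Finset.powersetCard i univ)
    (by intro g hg; rw [Finset.mem_coe, Finset.mem_powersetCard]
        exact ⟨Finset.subset_univ _, (Finset.mem_filter.mp (Finset.mem_coe.mp hg)).2⟩)]
  have step : ∀ S ∈ Finset.powersetCard i (univ : Finset α),
      ((univ.filter (fun g : α → Option β => (univ.filter (fun c => g c ≠ none)).card = i)).filter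
        (fun g => univ.filter (fun c => g c ≠ none) = S)).card = (Fintype.card β) ^ i := by
    intro S hS
    rw [Finset.mem_powersetCard] at hS
    rw [Finset.filter_filter]
    have : ∀ g : α → Option β,
        (((univ.filter (fun c => g c ≠ none)).card = i) ∧ univ.filter (fun c => g c ≠ none) = S)
        ↔ univ.filter (fun c => g c ≠ none) = S := by
      intro g
      constructor
      · exact fun h => h.2
      · intro h; exact ⟨by rw [h, hS.2], h⟩
    rw [Finset.filter_congr (fun g _ => this g), card_support_eq S, hS.2]
  rw [Finset.sum_congr rfl step, Finset.sum_const, Finset.card_powersetCard, Finset.card_univ,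
    smul_eq_mul]

private lemma card_powersetCard_mem (a : α) (j : ℕ) :
    ((Finset.powersetCard (j+1) (univ : Finset α)).filter (fun S => a ∈ S)).card
      = (Fintype.card α - 1).choose j := by
  classical
  rw [show (Fintype.card α - 1).choose j = (Finset.powersetCard j (univ.erase a)).card by
    rw [Finset.card_powersetCard, Finset.card_erase_of_mem (Finset.mem_univ a), Finset.card_univ]]
  apply Finset.card_nbij' (i := fun S => S.erase a) (j := fun S => insert a S)
  · intro S hS
    simp only [Finset.mem_coe, Finset.mem_filter, Finset.mem_powersetCard] at hS ⊢
    constructor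
    · intro x hx
      rw [Finset.mem_erase] at hx ⊢
      exact ⟨hx.1, Finset.mem_univ x⟩
    · rw [Finset.card_erase_of_mem hS.2, hS.1.2]
      omega
  · intro S hS
    rw [Finset.mem_coe, Finset.mem_powersetCard] at hS
    have ha : a ∉ S := fun h => by
      have := hS.1 h; rw [Finset.mem_erase] at this; exact this.1 rfl
    simp only [Finset.mem_coe, Finset.mem_filter, Finset.mem_powersetCard]
    exact ⟨⟨Finset.subset_univ _, by rw [Finset.card_insert_of_notMem ha, hS.2]⟩,
      Finset.mem_insert_self a S⟩
  · intro S hS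
    simp only [Finset.mem_coe, Finset.mem_filter] at hS
    exact Finset.insert_erase hS.2
  · intro S hS
    rw [Finset.mem_coe, Finset.mem_powersetCard] at hS
    have ha : a ∉ S := fun h => by
      have := hS.1 h; rw [Finset.mem_erase] at this; exact this.1 rfl
    exact Finset.erase_insert ha

end counting

private lemma rao_contrasts (n : ℕ) (hn : 2 ≤ n) :
    ∃ h : Fin (n-1) → Fin n → ℝ,
      (∀ i, ∑ s, h i s = 0) ∧ (∀ i j, ∑ s, h i s * h j s = if i = j then 1 else 0) := by
  have hnpos : 0 < n := by omega
  set u : EuclideanSpace ℝ (Fin n) := WithLp.toLp 2 (fun _ => 1) with hu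
  have hu0 : u ≠ 0 := by
    intro h
    have := congrArg (fun v : EuclideanSpace ℝ (Fin n) => v ⟨0, hnpos⟩) h
    simp [u] at this
  set K : Submodule ℝ (EuclideanSpace ℝ (Fin n)) := ℝ ∙ u with hK
  have hK1 : finrank ℝ K = 1 := finrank_span_singleton hu0
  have hdim : finrank ℝ Kᗮ = n - 1 := by
    have := K.finrank_add_finrank_orthogonal
    rw [hK1, finrank_euclideanSpace_fin] at this
    omega
  let b := stdOrthonormalBasis ℝ Kᗮ
  refine ⟨fun i s => (b (Fin.cast hdim.symm i) : EuclideanSpace ℝ (Fin n)) s, ?_, ?_⟩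
  · intro i
    have hmem := (b (Fin.cast hdim.symm i)).2
    have h0 := (Submodule.mem_orthogonal K _).1 hmem u (Submodule.mem_span_singleton_self u)
    rw [PiLp.inner_apply] at h0
    simpa [u] using h0
  · intro i j
    have horth := orthonormal_iff_ite.mp b.orthonormal (Fin.cast hdim.symm i) (Fin.cast hdim.symm j)
    rw [Submodule.coe_inner, PiLp.inner_apply] at horth
    simp only [RCLike.inner_apply, starRingEnd_apply, star_trivial] at horth
    refine (Finset.sum_congr rfl (fun s _ => mul_comm _ _)).trans ?_
    rw [horth]
    congr 1
    simp [Fin.ext_iff]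

private lemma rao_row_count (k n lam t : ℕ) (htk : t ≤ k)
    (A : Fin (lam * n ^ t) → Fin k → Fin n)
    (hOA : ∀ c : Fin t → Fin k, Function.Injective c → ∀ x : Fin t → Fin n,
      (Finset.univ.filter (fun r => ∀ i, A r (c i) = x i)).card = lam) :
    ∀ d : ℕ, ∀ U : Finset (Fin k), U.card + d = t → ∀ x : Fin k → Fin n,
      (univ.filter (fun r => ∀ c ∈ U, A r c = x c)).card = lam * n ^ d := by
  intro d
  induction d with
  | zero =>
    intro U hU x
    have hUt : U.card = t := by omega
    let e := U.orderIsoOfFin hUt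
    have hinj : Function.Injective (fun i : Fin t => (e i : Fin k)) := by
      intro a b hab
      exact e.injective (Subtype.ext hab)
    have hcards := hOA _ hinj (fun i => x (e i))
    have heq : (univ.filter (fun r => ∀ c ∈ U, A r c = x c))
        = univ.filter (fun r => ∀ i : Fin t, A r (e i) = x (e i)) := by
      apply Finset.filter_congr
      intro r _
      constructor
      · intro h i
        exact h (e i) (e i).2
      · intro h c hc
        have := h (e.symm ⟨c, hc⟩)
        simpa using this
    rw [pow_zero, mul_one, heq]
    exact hcards
  | succ d ih =>
    intro U hU x
    have hneuniv : U ≠ univ := by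
      intro h
      rw [h, Finset.card_univ, Fintype.card_fin] at hU
      omega
    have hex : ∃ c₀ : Fin k, c₀ ∉ U := by
      by_contra hcon
      push_neg at hcon
      exact hneuniv (Finset.eq_univ_of_forall hcon)
    obtain ⟨c₀, hc₀⟩ := hex
    rw [Finset.card_eq_sum_card_fiberwise
      (f := fun r => A r c₀) (t := univ) (fun r _ => Finset.mem_univ _)]
    have step : ∀ s : Fin n,
        ((univ.filter (fun r => ∀ c ∈ U, A r c = x c)).filter (fun r => A r c₀ = s)).card
          = lam * n ^ d := by
      intro s
      rw [Finset.filter_filter]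
      have hins := ih (insert c₀ U)
        (by rw [Finset.card_insert_of_notMem hc₀]; omega) (Function.update x c₀ s)
      rw [← hins]
      congr 1
      apply Finset.filter_congr
      intro r _
      constructor
      · rintro ⟨h1, h2⟩ c hc
        rcases Finset.mem_insert.mp hc with rfl | hcU
        · rw [Function.update_self, h2]
        · rw [Function.update_of_ne (fun hcc => hc₀ (by rw [← hcc]; exact hcU))]
          exact h1 c hcU
      · intro h
        refine ⟨fun c hc => ?_, ?_⟩
        · have := h c (Finset.mem_insert_of_mem hc)
          rwa [Function.update_of_ne (fun hcc => hc₀ (by rw [← hcc]; exact hc))] at this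
        · have := h c₀ (Finset.mem_insert_self _ _)
          rwa [Function.update_self] at this
    rw [Finset.sum_congr rfl (fun s _ => step s), Finset.sum_const, Finset.card_univ,
      Fintype.card_fin, smul_eq_mul]
    ring


private theorem rao_sum_prod (k n lam t : ℕ) (hn : 0 < n) (htk : t ≤ k)
    (A : Fin (lam * n ^ t) → Fin k → Fin n)
    (hOA : ∀ c : Fin t → Fin k, Function.Injective c → ∀ x : Fin t → Fin n,
      (Finset.univ.filter (fun r => ∀ i, A r (c i) = x i)).card = lam)
    (U : Finset (Fin k)) (hU : U.card ≤ t) (F : Fin k → Fin n → ℝ)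
    (hF : ∀ c ∉ U, ∀ s, F c s = 1) :
    ∑ r, ∏ c, F c (A r c) = ((lam * n ^ (t - U.card) : ℕ) : ℝ) * ∏ c ∈ U, (∑ s, F c s) := by
  classical
  set z0 : Fin n := ⟨0, hn⟩ with hz0
  set proj : Fin (lam * n ^ t) → (Fin k → Fin n) :=
    fun r c => if c ∈ U then A r c else z0 with hproj
  have hprodU : ∀ r, ∏ c, F c (A r c) = ∏ c ∈ U, F c (A r c) := fun r =>
    (Finset.prod_subset (Finset.subset_univ U) (fun c _ hc => hF c hc (A r c))).symm
  rw [Finset.sum_congr rfl (fun r _ => hprodU r)]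
  rw [← Finset.sum_fiberwise univ proj (fun r => ∏ c ∈ U, F c (A r c))]
  -- inner sums
  have hinner : ∀ y : Fin k → Fin n,
      ∑ r ∈ univ.filter (fun r => proj r = y), ∏ c ∈ U, F c (A r c)
        = (if ∀ c, c ∉ U → y c = z0 then ((lam * n ^ (t - U.card) : ℕ) : ℝ) else 0)
          * ∏ c ∈ U, F c (y c) := by
    intro y
    have hval : ∀ r ∈ univ.filter (fun r => proj r = y),
        ∏ c ∈ U, F c (A r c) = ∏ c ∈ U, F c (y c) := by
      intro r hr
      rw [Finset.mem_filter] at hr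
      apply Finset.prod_congr rfl
      intro c hc
      have := congrFun hr.2 c
      rw [hproj] at this
      simp only [if_pos hc] at this
      rw [this]
    rw [Finset.sum_congr rfl hval, Finset.sum_const, nsmul_eq_mul]
    congr 1
    by_cases hy : ∀ c, c ∉ U → y c = z0
    · rw [if_pos hy]
      have heq : univ.filter (fun r => proj r = y)
          = univ.filter (fun r => ∀ c ∈ U, A r c = y c) := by
        apply Finset.filter_congr
        intro r _
        constructor
        · intro h c hc
          have h2 := congrFun h c
          simp only [hproj, if_pos hc] at h2
          exact h2
        · intro h
          funext c
          rw [hproj]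
          by_cases hc : c ∈ U
          · simp only [if_pos hc]; exact h c hc
          · simp only [if_neg hc]; exact (hy c hc).symm
      rw [heq, rao_row_count k n lam t htk A hOA (t - U.card) U (by omega) y]
    · rw [if_neg hy]
      push_neg at hy
      obtain ⟨c, hc, hyc⟩ := hy
      have : univ.filter (fun r => proj r = y) = ∅ := by
        apply Finset.filter_eq_empty_iff.mpr
        intro r _
        intro h
        have := congrFun h c
        rw [hproj] at this
        simp only [if_neg hc] at this
        exact hyc this.symm
      rw [this]
      simp
  rw [Finset.sum_congr rfl (fun y _ => hinner y)]
  -- now  Σ_y ite * prod = C * Σ_{y ∈ Y₀} prod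
  have hsplit : ∑ y : Fin k → Fin n,
      (if ∀ c, c ∉ U → y c = z0 then ((lam * n ^ (t - U.card) : ℕ) : ℝ) else 0)
        * ∏ c ∈ U, F c (y c)
      = ((lam * n ^ (t - U.card) : ℕ) : ℝ) *
        ∑ y ∈ univ.filter (fun y : Fin k → Fin n => ∀ c, c ∉ U → y c = z0),
          ∏ c ∈ U, F c (y c) := by
    rw [Finset.sum_filter, Finset.mul_sum]
    apply Finset.sum_congr rfl
    intro y _
    by_cases hy : ∀ c, c ∉ U → y c = z0 <;> simp [hy]
  rw [hsplit]
  congr 1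
  -- Σ_{y ∈ Y₀} ∏_{c ∈ U} F c (y c) = ∏_{c∈U} Σ_s F c s
  set F' : Fin k → Fin n → ℝ := fun c s => if c ∈ U then F c s else if s = z0 then 1 else 0
    with hF'
  have stepA : ∑ y ∈ univ.filter (fun y : Fin k → Fin n => ∀ c, c ∉ U → y c = z0),
      ∏ c ∈ U, F c (y c) = ∑ y : Fin k → Fin n, ∏ c, F' c (y c) := by
    rw [← Finset.sum_filter_add_sum_filter_not univ
      (fun y : Fin k → Fin n => ∀ c, c ∉ U → y c = z0) (fun y => ∏ c, F' c (y c))]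
    have h1 : ∀ y ∈ univ.filter (fun y : Fin k → Fin n => ∀ c, c ∉ U → y c = z0),
        ∏ c, F' c (y c) = ∏ c ∈ U, F c (y c) := by
      intro y hy
      rw [Finset.mem_filter] at hy
      rw [← Finset.prod_subset (Finset.subset_univ U) (fun c _ hc => by
        rw [hF']; simp [if_neg hc, hy.2 c hc])]
      apply Finset.prod_congr rfl
      intro c hc
      rw [hF']; simp only [if_pos hc]
    have h2 : ∀ y ∈ univ.filter (fun y : Fin k → Fin n => ¬ ∀ c, c ∉ U → y c = z0),
        ∏ c, F' c (y c) = 0 := by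
      intro y hy
      rw [Finset.mem_filter] at hy
      have := hy.2
      push_neg at this
      obtain ⟨c, hc, hyc⟩ := this
      apply Finset.prod_eq_zero (Finset.mem_univ c)
      rw [hF']; simp only [if_neg hc, if_neg hyc]
    rw [Finset.sum_congr rfl h1, Finset.sum_congr rfl h2]
    simp
  rw [stepA]
  have stepB : ∑ y : Fin k → Fin n, ∏ c, F' c (y c) = ∏ c, ∑ s, F' c s := by
    rw [Finset.prod_univ_sum]
    rw [Fintype.piFinset_univ]
  rw [stepB]
  have stepC : ∏ c : Fin k, ∑ s, F' c s = ∏ c ∈ U, ∑ s, F' c s := by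
    symm
    apply Finset.prod_subset (Finset.subset_univ U)
    intro c _ hc
    rw [hF']
    simp only [if_neg hc]
    rw [Finset.sum_ite_eq' univ z0 (fun _ => (1:ℝ))]
    simp
  rw [stepC]
  apply Finset.prod_congr rfl
  intro c hc
  apply Finset.sum_congr rfl
  intro s _
  rw [hF']
  simp [hc]

private lemma rao_binom (n K : ℕ) (hn : 1 ≤ n) :
    ∑ i ∈ range (K+1), K.choose i * (n-1)^i = n^K := by
  have h := add_pow (n-1) 1 K  -- ((n-1)+1)^K = Σ ...
  have hn1 : n - 1 + 1 = n := by omega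
  rw [hn1] at h
  rw [h]
  apply Finset.sum_congr rfl
  intro i _
  simp [Nat.cast_id, one_pow]
  ring

private lemma rao_trivial_case (k n lam t : ℕ) (hk : 2 ≤ k) (hn : 2 ≤ n) (hlam : 1 ≤ lam)
    (ht : 3 ≤ t) (htodd : Odd t) (hkt : k < t) :
    1 + (∑ i ∈ Finset.Icc 1 ((t - 1) / 2), Nat.choose k i * (n - 1) ^ i) +
      Nat.choose (k - 1) ((t - 1) / 2) * (n - 1) ^ ((t + 1) / 2) ≤ lam * n ^ t := by
  obtain ⟨w, hw⟩ := htodd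
  set e := (t-1)/2 with he
  have hee : e = w := by omega
  have het1 : (t+1)/2 = e + 1 := by omega
  set x := n - 1 with hx
  have part1 : 1 + (∑ i ∈ Finset.Icc 1 e, Nat.choose k i * x ^ i) ≤ n ^ k := by
    have h0 : (1 : ℕ) + ∑ i ∈ Finset.Icc 1 e, Nat.choose k i * x ^ i
        = ∑ i ∈ Finset.Icc 0 e, Nat.choose k i * x ^ i := by
      have : Finset.Icc 0 e = insert 0 (Finset.Icc 1 e) := by
        ext i; simp; omega
      rw [this, Finset.sum_insert (by simp)]
      simp
    rw [h0]
    calc ∑ i ∈ Finset.Icc 0 e, Nat.choose k i * x ^ i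
        ≤ ∑ i ∈ Finset.Icc 0 (max e k), Nat.choose k i * x ^ i := by
          apply Finset.sum_le_sum_of_subset
          apply Finset.Icc_subset_Icc_right
          exact le_max_left e k
      _ = ∑ i ∈ Finset.Icc 0 k, Nat.choose k i * x ^ i := by
          symm
          apply Finset.sum_subset
          · apply Finset.Icc_subset_Icc_right; exact le_max_right e k
          · intro i _ hi
            simp only [Finset.mem_Icc] at hi
            have : k < i := by omega
            rw [Nat.choose_eq_zero_of_lt this, zero_mul]
      _ = ∑ i ∈ range (k+1), Nat.choose k i * x ^ i := by
          apply Finset.sum_congr _ (fun _ _ => rfl)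
          ext i; simp
      _ = n ^ k := rao_binom n k (by omega)
  have part2 : Nat.choose (k - 1) e * x ^ (e+1) ≤ n ^ k := by
    by_cases hek : e ≤ k - 1
    · have hs : Nat.choose (k-1) e * x ^ e ≤ n ^ (k-1) := by
        rw [← rao_binom n (k-1) (by omega)]
        apply Finset.single_le_sum (f := fun i => Nat.choose (k-1) i * x ^ i)
          (fun i _ => Nat.zero_le _)
        simp
        omega
      calc Nat.choose (k-1) e * x ^ (e+1) = (Nat.choose (k-1) e * x ^ e) * x := by ring
        _ ≤ n ^ (k-1) * n := by
            apply Nat.mul_le_mul hs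
            omega
        _ = n ^ k := by
            rw [← pow_succ]
            congr 1
            omega
    · rw [Nat.choose_eq_zero_of_lt (by omega), zero_mul]
      exact Nat.zero_le _
  rw [het1]
  calc 1 + (∑ i ∈ Finset.Icc 1 e, Nat.choose k i * x ^ i) + Nat.choose (k - 1) e * x ^ (e+1)
      ≤ n ^ k + n ^ k := Nat.add_le_add part1 part2
    _ ≤ n ^ t := by
        have h1 : n ^ k + n ^ k ≤ n * n ^ k := by nlinarith [pow_pos (show 0 < n by omega) k]
        have h2 : n * n ^ k = n ^ (k+1) := by rw [pow_succ]; ring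
        have h3 : n ^ (k+1) ≤ n ^ t := Nat.pow_le_pow_right (by omega) (by omega)
        omega
    _ ≤ lam * n ^ t := Nat.le_mul_of_pos_left _ (by omega)

private lemma card_osupp_eq {α β : Type*} [Fintype α] [DecidableEq α] [Fintype β] [DecidableEq β]
    (S : Finset α) :
    (univ.filter (fun g : α → Option β => osupp g = S)).card = (Fintype.card β) ^ S.card := by
  unfold osupp; convert card_support_eq (β := β) S

private lemma card_osupp_card_eq {α β : Type*} [Fintype α] [DecidableEq α] [Fintype β]
    [DecidableEq β] (i : ℕ) :
    (univ.filter (fun g : α → Option β => (osupp g).card = i)).card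
      = (Fintype.card α).choose i * (Fintype.card β) ^ i := by
  unfold osupp; convert card_support_card_eq (α := α) (β := β) i

private lemma card_powersetCard_mem' {α : Type*} [Fintype α] [DecidableEq α] (a : α) (j : ℕ) :
    ((Finset.powersetCard (j+1) (univ : Finset α)).filter (fun S => a ∈ S)).card
      = (Fintype.card α - 1).choose j := card_powersetCard_mem a j

private lemma rao_contrasts' (n : ℕ) (hn : 2 ≤ n) :
    ∃ h : Fin (n-1) → Fin n → ℝ,
      (∀ i, ∑ s, h i s = 0) ∧ (∀ i j, ∑ s, h i s * h j s = if i = j then 1 else 0) :=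
  rao_contrasts n hn

private theorem rao_sum_prod' (k n lam t : ℕ) (hn : 0 < n) (htk : t ≤ k)
    (A : Fin (lam * n ^ t) → Fin k → Fin n)
    (hOA : ∀ c : Fin t → Fin k, Function.Injective c → ∀ x : Fin t → Fin n,
      (Finset.univ.filter (fun r => ∀ i, A r (c i) = x i)).card = lam)
    (U : Finset (Fin k)) (hU : U.card ≤ t) (F : Fin k → Fin n → ℝ)
    (hF : ∀ c ∉ U, ∀ s, F c s = 1) :
    ∑ r, ∏ c, F c (A r c) = ((lam * n ^ (t - U.card) : ℕ) : ℝ) * ∏ c ∈ U, (∑ s, F c s) :=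
  rao_sum_prod k n lam t hn htk A hOA U hU F hF



private theorem rao_main (k n lam t : ℕ) (hk : 2 ≤ k) (hn : 2 ≤ n) (hlam : 1 ≤ lam)
    (ht : 3 ≤ t) (htodd : Odd t) (htk : t ≤ k)
    (A : Fin (lam * n ^ t) → Fin k → Fin n)
    (hOA : ∀ c : Fin t → Fin k, Function.Injective c → ∀ x : Fin t → Fin n,
      (Finset.univ.filter (fun r => ∀ i, A r (c i) = x i)).card = lam) :
    1 + (∑ i ∈ Finset.Icc 1 ((t - 1) / 2), Nat.choose k i * (n - 1) ^ i) +
      Nat.choose (k - 1) ((t - 1) / 2) * (n - 1) ^ ((t + 1) / 2) ≤ lam * n ^ t := by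
  classical
  obtain ⟨m, hm⟩ := htodd
  have hins : Finset.range (m+1) = insert 0 (Finset.Icc 1 m) := by
    ext i
    simp only [Finset.mem_range, Finset.mem_insert, Finset.mem_Icc]
    omega
  obtain ⟨h, hh0, hh1⟩ := rao_contrasts' n hn
  let q : (Fin k → Option (Fin (n-1))) → Fin k → Fin n → ℝ :=
    fun g c s => Option.elim (g c) 1 (fun i => h i s)
  let v : (Fin k → Option (Fin (n-1))) → Fin (lam * n ^ t) → ℝ :=
    fun g r => ∏ c, q g c (A r c)
  -- inner products
  have hip : ∀ g g' : Fin k → Option (Fin (n-1)), (osupp g ∪ osupp g').card ≤ t →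
      ∑ r, v g r * v g' r
        = ((lam * n ^ (t - (osupp g ∪ osupp g').card) : ℕ) : ℝ)
          * ∏ c ∈ (osupp g ∪ osupp g'), (∑ s, q g c s * q g' c s) := by
    intro g g' hcard
    have key := rao_sum_prod' k n lam t (by omega) htk A hOA (osupp g ∪ osupp g') hcard
      (fun c s => q g c s * q g' c s) ?_
    · rw [← key]
      apply Finset.sum_congr rfl
      intro r _
      rw [← Finset.prod_mul_distrib]
    · intro c hc s
      rw [Finset.mem_union] at hc
      push_neg at hc
      have h1 : g c = none := by
        have := hc.1
        simp only [osupp, Finset.mem_filter, Finset.mem_univ, true_and, not_not] at this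
        exact this
      have h2 : g' c = none := by
        have := hc.2
        simp only [osupp, Finset.mem_filter, Finset.mem_univ, true_and, not_not] at this
        exact this
      simp [q, h1, h2]
  have horth : ∀ g g', (osupp g ∪ osupp g').card ≤ t → g ≠ g' →
      ∑ r, v g r * v g' r = 0 := by
    intro g g' hcard hne
    rw [hip g g' hcard]
    obtain ⟨c, hc⟩ := Function.ne_iff.mp hne
    have hcmem : c ∈ osupp g ∪ osupp g' := by
      rw [Finset.mem_union]
      by_contra hcon
      push_neg at hcon
      simp only [osupp, Finset.mem_filter, Finset.mem_univ, true_and, not_not] at hcon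
      exact hc (hcon.1.trans hcon.2.symm)
    have hzero : ∑ s, q g c s * q g' c s = 0 := by
      rcases hgc : g c with _ | i <;> rcases hgc' : g' c with _ | j
      · exact absurd (hgc.trans hgc'.symm) hc
      · simp only [q, hgc, hgc', Option.elim, one_mul]
        exact hh0 j
      · simp only [q, hgc, hgc', Option.elim, mul_one]
        exact hh0 i
      · have hij : i ≠ j := by
          intro hij
          exact hc (by rw [hgc, hgc', hij])
        simp only [q, hgc, hgc', Option.elim]
        rw [hh1 i j, if_neg hij]
    rw [Finset.prod_eq_zero hcmem hzero, mul_zero]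
  have hdiag : ∀ g, (osupp g).card ≤ t →
      ∑ r, v g r * v g r = ((lam * n ^ (t - (osupp g).card) : ℕ) : ℝ) := by
    intro g hcard
    have key := hip g g (by rwa [Finset.union_self])
    rw [Finset.union_self] at key
    rw [key]
    have hone : ∏ c ∈ osupp g, (∑ s, q g c s * q g c s) = 1 := by
      apply Finset.prod_eq_one
      intro c hc
      simp only [osupp, Finset.mem_filter, Finset.mem_univ, true_and] at hc
      obtain ⟨i, hi⟩ := Option.ne_none_iff_exists'.mp hc
      simp only [q, hi, Option.elim]
      rw [hh1 i i, if_pos rfl]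
    rw [hone, mul_one]
  -- the index family
  have hkpos : 0 < k := by omega
  let c0 : Fin k := ⟨0, hkpos⟩
  let P : (Fin k → Option (Fin (n-1))) → Prop :=
    fun g => (osupp g).card ≤ m ∨ ((osupp g).card = m + 1 ∧ g c0 ≠ none)
  have hpair : ∀ g g', P g → P g' → (osupp g ∪ osupp g').card ≤ t := by
    intro g g' hg hg'
    have hcu := Finset.card_union_le (osupp g) (osupp g')
    rcases hg with hg | hg <;> rcases hg' with hg' | hg'
    · omega
    · omega
    · omega
    · have hint : 0 < (osupp g ∩ osupp g').card := by
        apply Finset.card_pos.mpr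
        refine ⟨c0, Finset.mem_inter.mpr ⟨?_, ?_⟩⟩
        · simp only [osupp, Finset.mem_filter, Finset.mem_univ, true_and]
          exact hg.2
        · simp only [osupp, Finset.mem_filter, Finset.mem_univ, true_and]
          exact hg'.2
      have := Finset.card_union_add_card_inter (osupp g) (osupp g')
      omega
  have hPt : ∀ g, P g → (osupp g).card ≤ t := by
    intro g hg
    rcases hg with hg | hg <;> omega
  -- linear independence
  have hli : LinearIndependent ℝ (fun gg : {g : Fin k → Option (Fin (n-1)) // P g} => v gg.1) := by
    rw [Fintype.linearIndependent_iff]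
    intro a hsum i0
    have hpaired := congrArg (fun f : Fin (lam * n ^ t) → ℝ => ∑ r, f r * v i0.1 r) hsum
    simp only [Finset.sum_apply, Pi.smul_apply, smul_eq_mul, Pi.zero_apply, zero_mul,
      Finset.sum_const_zero] at hpaired
    have hswap : ∑ r, (∑ i : {g : Fin k → Option (Fin (n-1)) // P g}, a i * v i.1 r) * v i0.1 r
        = ∑ i : {g : Fin k → Option (Fin (n-1)) // P g}, a i * ∑ r, v i.1 r * v i0.1 r := by
      calc ∑ r, (∑ i : {g : Fin k → Option (Fin (n-1)) // P g}, a i * v i.1 r) * v i0.1 r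
          = ∑ r, ∑ i : {g : Fin k → Option (Fin (n-1)) // P g}, a i * v i.1 r * v i0.1 r := by
            apply Finset.sum_congr rfl
            intro r _
            rw [Finset.sum_mul]
        _ = ∑ i : {g : Fin k → Option (Fin (n-1)) // P g}, ∑ r, a i * v i.1 r * v i0.1 r :=
            Finset.sum_comm
        _ = _ := by
            apply Finset.sum_congr rfl
            intro i _
            rw [Finset.mul_sum]
            apply Finset.sum_congr rfl
            intro r _
            ring
    rw [hswap] at hpaired
    have hsingle : ∑ i : {g : Fin k → Option (Fin (n-1)) // P g}, a i * ∑ r, v i.1 r * v i0.1 r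
        = a i0 * ∑ r, v i0.1 r * v i0.1 r := by
      apply Finset.sum_eq_single i0
      · intro i _ hne
        rw [horth i.1 i0.1 (hpair _ _ i.2 i0.2) (fun hval => hne (Subtype.ext hval)), mul_zero]
      · intro hmem
        exact absurd (Finset.mem_univ i0) hmem
    rw [hsingle, hdiag i0.1 (hPt i0.1 i0.2)] at hpaired
    have hnz : ((lam * n ^ (t - (osupp i0.1).card) : ℕ) : ℝ) ≠ 0 := by
      rw [Nat.cast_ne_zero]
      exact Nat.mul_ne_zero (by omega) (pow_ne_zero _ (by omega))
    rcases mul_eq_zero.mp hpaired with hz | hz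
    · exact hz
    · exact absurd hz hnz
  have hcard := hli.fintype_card_le_finrank
  rw [Module.finrank_fintype_fun_eq_card, Fintype.card_fin] at hcard
  have hcount : Fintype.card {g : Fin k → Option (Fin (n-1)) // P g}
      = (1 + ∑ i ∈ Finset.Icc 1 m, Nat.choose k i * (n - 1) ^ i)
        + Nat.choose (k - 1) m * (n - 1) ^ (m + 1) := by
    rw [Fintype.card_subtype]
    have hsplitP : (univ.filter P)
        = (univ.filter (fun g : Fin k → Option (Fin (n-1)) => (osupp g).card ≤ m))
          ∪ (univ.filter (fun g : Fin k → Option (Fin (n-1)) =>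
              (osupp g).card = m + 1 ∧ g c0 ≠ none)) := by
      rw [← Finset.filter_or]
    have hdisj : Disjoint
        (univ.filter (fun g : Fin k → Option (Fin (n-1)) => (osupp g).card ≤ m))
        (univ.filter (fun g : Fin k → Option (Fin (n-1)) =>
            (osupp g).card = m + 1 ∧ g c0 ≠ none)) := by
      rw [Finset.disjoint_left]
      intro g h1 h2
      simp only [Finset.mem_filter] at h1 h2
      omega
    rw [hsplitP, Finset.card_union_of_disjoint hdisj]
    have hc1 : (univ.filter (fun g : Fin k → Option (Fin (n-1)) => (osupp g).card ≤ m)).card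
        = ∑ i ∈ Finset.range (m+1), Nat.choose k i * (n-1) ^ i := by
      rw [Finset.card_eq_sum_card_fiberwise (f := fun g => (osupp g).card)
        (t := Finset.range (m+1))
        (fun g hg => Finset.mem_range.mpr (by
          show (osupp g).card < m + 1
          simp only [Finset.mem_coe, Finset.mem_filter] at hg
          omega))]
      apply Finset.sum_congr rfl
      intro i hi
      rw [Finset.mem_range] at hi
      rw [Finset.filter_filter]
      have hiff : ∀ g : Fin k → Option (Fin (n-1)),
          ((osupp g).card ≤ m ∧ (osupp g).card = i) ↔ (osupp g).card = i := by
        intro g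
        constructor
        · exact fun hx => hx.2
        · exact fun hx => ⟨by omega, hx⟩
      rw [Finset.filter_congr (fun g _ => hiff g), card_osupp_card_eq i, Fintype.card_fin,
        Fintype.card_fin]
    have hc2 : (univ.filter (fun g : Fin k → Option (Fin (n-1)) =>
        (osupp g).card = m + 1 ∧ g c0 ≠ none)).card
        = Nat.choose (k-1) m * (n-1) ^ (m+1) := by
      rw [Finset.card_eq_sum_card_fiberwise (f := fun g => osupp g)
        (t := (Finset.powersetCard (m+1) (univ : Finset (Fin k))).filter (fun S => c0 ∈ S))
        ?_]
      · have hfib : ∀ S ∈ (Finset.powersetCard (m+1) (univ : Finset (Fin k))).filter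
            (fun S => c0 ∈ S),
            ((univ.filter (fun g : Fin k → Option (Fin (n-1)) =>
              (osupp g).card = m + 1 ∧ g c0 ≠ none)).filter
                (fun g => osupp g = S)).card = (n-1)^(m+1) := by
          intro S hS
          rw [Finset.mem_filter, Finset.mem_powersetCard] at hS
          rw [Finset.filter_filter]
          have hiff : ∀ g : Fin k → Option (Fin (n-1)),
              (((osupp g).card = m + 1 ∧ g c0 ≠ none) ∧ osupp g = S) ↔ osupp g = S := by
            intro g
            constructor
            · exact fun hx => hx.2
            · intro hx
              refine ⟨⟨by rw [hx]; exact hS.1.2, ?_⟩, hx⟩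
              have hc0S : c0 ∈ osupp g := by rw [hx]; exact hS.2
              simpa [osupp] using hc0S
          rw [Finset.filter_congr (fun g _ => hiff g), card_osupp_eq S, Fintype.card_fin,
            hS.1.2]
        rw [Finset.sum_congr rfl hfib, Finset.sum_const, smul_eq_mul,
          card_powersetCard_mem' c0 m, Fintype.card_fin]
      · intro g hg
        rw [Finset.mem_coe, Finset.mem_filter] at hg
        rw [Finset.mem_coe, Finset.mem_filter, Finset.mem_powersetCard]
        refine ⟨⟨Finset.subset_univ _, hg.2.1⟩, ?_⟩
        simp only [osupp, Finset.mem_filter, Finset.mem_univ, true_and]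
        exact hg.2.2
    rw [hc1, hc2]
    rw [hins, Finset.sum_insert (by simp)]
    simp
  have hm1 : (t - 1) / 2 = m := by omega
  have hm2 : (t + 1) / 2 = m + 1 := by omega
  rw [hm1, hm2]
  rw [hcount] at hcard
  omega



/-- Rao bound, odd strength: if an OA_λ(t,k,n) of odd strength t ≥ 3 exists
(k ≥ 2, n ≥ 2, λ ≥ 1), then
λn^t ≥ 1 + Σ_{i=1}^{(t−1)/2} C(k,i)(n−1)^i + C(k−1,(t−1)/2)(n−1)^{(t+1)/2}. -/
theorem rao_bound_odd (k n lam t : ℕ) (hk : 2 ≤ k) (hn : 2 ≤ n) (hlam : 1 ≤ lam)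
    (ht : 3 ≤ t) (htodd : Odd t)
    (A : Fin (lam * n ^ t) → Fin k → Fin n)
    (hOA : ∀ c : Fin t → Fin k, Function.Injective c → ∀ x : Fin t → Fin n,
      (Finset.univ.filter (fun r => ∀ i, A r (c i) = x i)).card = lam) :
    1 + (∑ i ∈ Finset.Icc 1 ((t - 1) / 2), Nat.choose k i * (n - 1) ^ i) +
      Nat.choose (k - 1) ((t - 1) / 2) * (n - 1) ^ ((t + 1) / 2) ≤ lam * n ^ t := by
  rcases le_or_gt t k with htk | hkt
  · exact rao_main k n lam t hk hn hlam ht htodd htk A hOA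
  · exact rao_trivial_case k n lam t hk hn hlam ht htodd hkt
end

section
/- (Mann's inequality) If there exists a 2-(v,k,λ) design with v ≥ k + 1, having b blocks, in which some block occurs with multiplicity m, then b ≥ mv. -/
open Finset

private lemma nat_cast_mul_pred (nn : ℕ) :
    ((nn : ℤ)) ^ 2 = ((nn * (nn - 1) : ℕ) : ℤ) + nn := by
  cases nn with
  | zero => simp
  | succ p => push_cast [Nat.succ_sub_one]; ring

private lemma mann_arith (V K L Bb M R Sm Pq Cc : ℤ)
    (hK2 : 2 ≤ K) (hV : K + 1 ≤ V) (hM1 : 1 ≤ M) (hML : M ≤ L) (hL1 : 1 ≤ L)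
    (hRep : R * (K - 1) = L * (V - 1)) (hBK : V * R = Bb * K)
    (hsm : M * K + Sm = K * R) (hsp : M * (K * (K - 1)) + Pq = L * (K * (K - 1)))
    (hcc : M + Cc = Bb) (hcs : Sm ^ 2 ≤ Cc * (Pq + Sm)) : M * V ≤ Bb := by
  by_contra hcon
  push_neg at hcon
  have hR1 : 1 ≤ R := by
    by_contra h
    push_neg at h
    have h1 : R * (K - 1) ≤ 0 :=
      mul_nonpos_of_nonpos_of_nonneg (by linarith) (by linarith)
    have h2 : 0 < L * (V - 1) := mul_pos (by linarith) (by linarith)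
    linarith [hRep]
  have h3 : V * R + K ≤ M * V * K := by
    have := mul_le_mul_of_nonneg_right (show Bb + 1 ≤ M * V by linarith)
      (show (0:ℤ) ≤ K by linarith)
    nlinarith [hBK]
  have hmk : R + 1 ≤ M * K := by
    by_contra h
    push_neg at h
    have : V * (M * K) ≤ V * R :=
      mul_le_mul_of_nonneg_left (by linarith) (by linarith : (0:ℤ) ≤ V)
    nlinarith [h3]
  have h4 : R ≤ L * K - 1 := by
    have := mul_le_mul_of_nonneg_right hML (show (0:ℤ) ≤ K by linarith)
    linarith [hmk]
  have h5 : L * (V - 1) ≤ (L * K - 1) * (K - 1) := by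
    rw [← hRep]
    exact mul_le_mul_of_nonneg_right h4 (by linarith)
  have hvk : V ≤ K * K - K := by
    by_contra h
    push_neg at h
    have h6 : L * (K * K - K) ≤ L * (V - 1) :=
      mul_le_mul_of_nonneg_left (by linarith) (by linarith)
    nlinarith [h5, h6]
  set C : ℤ := R * (V - 2 * K + 1) + L * (K - 1) with hC
  set E : ℤ := K * R ^ 2 - Bb * R - Bb * L * (K - 1) with hE
  have e1 : Sm = K * R - M * K := by linarith
  have e2 : Pq = L * (K * (K - 1)) - M * (K * (K - 1)) := by linarith
  have e3 : Cc = Bb - M := by linarith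
  have key : K * (M * C + E) = Sm ^ 2 - Cc * (Pq + Sm) := by
    rw [hC, hE, e1, e2, e3]
    linear_combination (M * K) * hBK
  have hD : K * (M * C + E) ≤ 0 := by rw [key]; linarith [hcs]
  have hD' : M * C + E ≤ 0 := by
    by_contra h
    push_neg at h
    nlinarith [mul_pos (show (0:ℤ) < K by linarith) h]
  have key1 : (V - 1) * ((R + 1) * C + K * E) = R * (V - K) ^ 2 := by
    rw [hC, hE]
    linear_combination (-(K - 1) * (R + 1 - V * R)) * hRep + ((V - 1) * (R + L * (K - 1))) * hBK
  have key2 : K * (V - 1) ^ 2 * (L * C + E) = R ^ 2 * (V - K) ^ 2 * (K ^ 2 - K + 1 - V) := by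
    rw [hC, hE]
    linear_combination
      (-(K * R * (V - 2 * K + 1) * (V - 1) + K * (K - 1) * (L * (V - 1) + R * (K - 1))
        - V * R * (K - 1) * (V - 1))) * hRep + ((V - 1) ^ 2 * (R + L * (K - 1))) * hBK
  rcases le_or_gt 0 C with hCpos | hCneg
  · have h6 : 0 < R * (V - K) ^ 2 :=
      mul_pos (by linarith) (pow_pos (by linarith) 2)
    have h7 : 0 < (R + 1) * C + K * E := by
      by_contra h
      push_neg at h
      have h9 : (V - 1) * ((R + 1) * C + K * E) ≤ 0 :=
        mul_nonpos_of_nonneg_of_nonpos (by linarith) h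
      rw [key1] at h9
      linarith
    have h8 : (R + 1) * C ≤ (M * K) * C := mul_le_mul_of_nonneg_right hmk hCpos
    have h10 : K * (M * C + E) = M * K * C + K * E := by ring
    rw [h10] at hD
    linarith [hD, h7, h8]
  · have hk2v : 0 < K ^ 2 - K + 1 - V := by
      have : K * K = K ^ 2 := by ring
      linarith [hvk]
    have h6 : 0 < R ^ 2 * (V - K) ^ 2 * (K ^ 2 - K + 1 - V) :=
      mul_pos (mul_pos (pow_pos (by linarith) 2) (pow_pos (by linarith) 2)) hk2v
    have h7 : 0 < L * C + E := by
      by_contra h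
      push_neg at h
      have h9 : K * (V - 1) ^ 2 * (L * C + E) ≤ 0 :=
        mul_nonpos_of_nonneg_of_nonpos (by positivity) h
      rw [key2] at h9
      linarith
    have h8 : L * C ≤ M * C := mul_le_mul_of_nonpos_right hML (le_of_lt hCneg)
    linarith [hD', h7, h8]

/-- Mann's inequality: a 2-(v,k,λ) design with v ≥ k + 1 and b blocks in which some block
occurs with multiplicity m satisfies b ≥ mv. -/
theorem mann_inequality (v k lam b m : ℕ) (hlam : 1 ≤ lam) (hv : k + 1 ≤ v)
    (blocks : Fin b → Finset (Fin v))
    (hsize : ∀ i, (blocks i).card = k)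
    (hdesign : ∀ T : Finset (Fin v), T.card = 2 →
      (Finset.univ.filter (fun i => T ⊆ blocks i)).card = lam)
    (i₀ : Fin b)
    (hmult : (Finset.univ.filter (fun i => blocks i = blocks i₀)).card = m) :
    m * v ≤ b := by
  have hmb : m ≤ b := by
    rw [← hmult]
    exact (card_filter_le _ _).trans (by simp)
  -- trivial case v ≤ 1
  rcases Nat.lt_or_ge v 2 with hv2 | hv2
  · calc m * v ≤ m * 1 := Nat.mul_le_mul_left m (by omega)
      _ ≤ b := by simpa using hmb
  -- now v ≥ 2 : first, k ≥ 2
  have hk2 : 2 ≤ k := by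
    have hcard2 : 2 ≤ (Finset.univ : Finset (Fin v)).card := by simpa using hv2
    obtain ⟨T, -, hT⟩ := Finset.exists_subset_card_eq hcard2
    have hne : (Finset.univ.filter (fun i => T ⊆ blocks i)).Nonempty := by
      rw [← card_pos, hdesign T hT]; omega
    obtain ⟨i, hi⟩ := hne
    calc 2 = T.card := hT.symm
      _ ≤ (blocks i).card := card_le_card (mem_filter.mp hi).2
      _ = k := hsize i
  -- replication number
  set r : Fin v → ℕ := fun x => (univ.filter (fun i => x ∈ blocks i)).card with hr
  have hrep : ∀ x, r x * (k - 1) = lam * (v - 1) := by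
    intro x
    have hcalc : lam * (v - 1) = ∑ i : Fin b, (if x ∈ blocks i then k - 1 else 0) := by
      calc lam * (v - 1) = ∑ _y ∈ univ.erase x, lam := by
            rw [Finset.sum_const, card_erase_of_mem (mem_univ x), card_univ, Fintype.card_fin,
              smul_eq_mul, mul_comm]
        _ = ∑ y ∈ univ.erase x, ∑ i : Fin b, (if x ∈ blocks i ∧ y ∈ blocks i then 1 else 0) := by
            refine Finset.sum_congr rfl fun y hy => ?_
            have hyx : y ≠ x := ne_of_mem_erase hy
            rw [← hdesign {x, y} (card_pair hyx.symm), card_filter]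
            refine Finset.sum_congr rfl fun i _ => ?_
            congr 1
            simp [Finset.insert_subset_iff]
        _ = ∑ i : Fin b, ∑ y ∈ univ.erase x, (if x ∈ blocks i ∧ y ∈ blocks i then 1 else 0) :=
            Finset.sum_comm
        _ = ∑ i : Fin b, (if x ∈ blocks i then k - 1 else 0) := by
            refine Finset.sum_congr rfl fun i _ => ?_
            by_cases hx : x ∈ blocks i
            · simp only [hx, true_and, if_true]
              rw [← card_filter]
              have heq : (univ.erase x).filter (fun y => y ∈ blocks i) = (blocks i).erase x := by
                ext z; simp [mem_erase, and_comm]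
              rw [heq, card_erase_of_mem hx, hsize]
            · simp [hx]
    rw [hcalc, Finset.sum_ite, Finset.sum_const, Finset.sum_const_zero, add_zero, smul_eq_mul]
  -- pick base point, r constant
  have hvpos : 0 < v := by omega
  let x₀ : Fin v := ⟨0, hvpos⟩
  have hreq : ∀ x, r x = r x₀ := by
    intro x
    exact Nat.eq_of_mul_eq_mul_right (by omega : 0 < k - 1) (by rw [hrep x, hrep x₀])
  -- total incidences
  have htot : ∑ x : Fin v, r x = b * k := by
    calc ∑ x : Fin v, r x = ∑ x : Fin v, ∑ i : Fin b, (if x ∈ blocks i then 1 else 0) :=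
          Finset.sum_congr rfl fun x _ => card_filter _ _
      _ = ∑ i : Fin b, ∑ x : Fin v, (if x ∈ blocks i then 1 else 0) := Finset.sum_comm
      _ = ∑ i : Fin b, k := by
          refine Finset.sum_congr rfl fun i _ => ?_
          rw [← card_filter, filter_mem_eq_inter, univ_inter, hsize]
      _ = b * k := by rw [Finset.sum_const, card_univ, Fintype.card_fin, smul_eq_mul]
  have hbk : v * r x₀ = b * k := by
    rw [← htot, Finset.sum_congr rfl fun x _ => hreq x, Finset.sum_const, card_univ,
      Fintype.card_fin, smul_eq_mul]
  -- intersection numbers with the repeated block B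
  set B : Finset (Fin v) := blocks i₀ with hB
  set n : Fin b → ℕ := fun j => (blocks j ∩ B).card with hn
  have hnB : ∀ j, n j = (B.filter (fun x => x ∈ blocks j)).card := by
    intro j
    show (blocks j ∩ B).card = _
    rw [filter_mem_eq_inter, inter_comm]
  have hsumn : ∑ j, n j = k * r x₀ := by
    calc ∑ j, n j = ∑ j, ∑ x ∈ B, (if x ∈ blocks j then 1 else 0) := by
          refine Finset.sum_congr rfl fun j _ => ?_
          rw [hnB j]; exact card_filter _ _
      _ = ∑ x ∈ B, ∑ j, (if x ∈ blocks j then 1 else 0) := Finset.sum_comm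
      _ = ∑ x ∈ B, r x := Finset.sum_congr rfl fun x _ => (card_filter _ _).symm
      _ = ∑ x ∈ B, r x₀ := Finset.sum_congr rfl fun x _ => hreq x
      _ = k * r x₀ := by rw [Finset.sum_const, hB, hsize, smul_eq_mul]
  -- pair counts
  have hsumpair : ∑ j, n j * (n j - 1) = lam * (k * (k - 1)) := by
    have hswap : ∑ j, ∑ y ∈ B, ∑ z ∈ B.erase y, (if y ∈ blocks j ∧ z ∈ blocks j then 1 else 0)
        = ∑ y ∈ B, ∑ z ∈ B.erase y, ∑ j, (if y ∈ blocks j ∧ z ∈ blocks j then 1 else 0) := by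
      rw [Finset.sum_comm]
      exact Finset.sum_congr rfl fun y _ => Finset.sum_comm
    calc ∑ j, n j * (n j - 1)
        = ∑ j, ∑ y ∈ B, ∑ z ∈ B.erase y, (if y ∈ blocks j ∧ z ∈ blocks j then 1 else 0) := by
          refine Finset.sum_congr rfl fun j _ => ?_
          have hinner : ∀ y, ∑ z ∈ B.erase y, (if y ∈ blocks j ∧ z ∈ blocks j then 1 else 0)
              = if y ∈ blocks j then ((B.filter (fun x => x ∈ blocks j)).erase y).card else 0 := by
            intro y
            by_cases hy : y ∈ blocks j
            · simp only [hy, true_and, if_true]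
              rw [← card_filter]
              congr 1
              rw [Finset.filter_erase]
            · simp [hy]
          rw [Finset.sum_congr rfl fun y _ => hinner y]
          rw [Finset.sum_ite, Finset.sum_const_zero, add_zero]
          have hcardsame : ∀ y ∈ B.filter (fun x => x ∈ blocks j),
              ((B.filter (fun x => x ∈ blocks j)).erase y).card = n j - 1 := by
            intro y hy
            rw [card_erase_of_mem hy, ← hnB]
          rw [Finset.sum_congr rfl hcardsame, Finset.sum_const, smul_eq_mul, ← hnB]
      _ = ∑ y ∈ B, ∑ z ∈ B.erase y, ∑ j, (if y ∈ blocks j ∧ z ∈ blocks j then 1 else 0) := hswap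
      _ = ∑ y ∈ B, ∑ z ∈ B.erase y, lam := by
          refine Finset.sum_congr rfl fun y _ => Finset.sum_congr rfl fun z hz => ?_
          have hzy : z ≠ y := ne_of_mem_erase hz
          rw [← hdesign {y, z} (card_pair hzy.symm), card_filter]
          refine Finset.sum_congr rfl fun i _ => ?_
          congr 1
          simp [Finset.insert_subset_iff]
      _ = lam * (k * (k - 1)) := by
          rw [Finset.sum_congr rfl (fun y hy => by
            rw [Finset.sum_const, card_erase_of_mem hy, hB, hsize, smul_eq_mul])]
          rw [Finset.sum_const, hB, hsize, smul_eq_mul]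
          ring
  -- the copies
  have hcopyn : ∀ j ∈ univ.filter (fun j => blocks j = B), n j = k := by
    intro j hj
    show (blocks j ∩ B).card = k
    rw [(mem_filter.mp hj).2, inter_self, hB, hsize]
  have hcard_split : m + (univ.filter (fun j => ¬ blocks j = B)).card = b := by
    rw [← hmult]
    have := Finset.card_filter_add_card_filter_not
      (s := (univ : Finset (Fin b))) (p := fun j => blocks j = B)
    simpa using this
  have hm1 : 1 ≤ m := by
    rw [← hmult]
    exact card_pos.mpr ⟨i₀, by simp [hB]⟩
  have hmlam : m ≤ lam := by
    obtain ⟨T, hTB, hT2⟩ := Finset.exists_subset_card_eq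
      (by rw [hB, hsize]; omega : 2 ≤ B.card)
    rw [← hmult, ← hdesign T hT2]
    apply card_le_card
    intro j hj
    simp only [mem_filter, mem_univ, true_and] at hj ⊢
    rw [hj]
    exact hTB
  -- sums over non-copies
  set s' := univ.filter (fun j => ¬ blocks j = B) with hs'
  have hsplit1 : m * k + ∑ j ∈ s', n j = k * r x₀ := by
    rw [← hsumn, ← Finset.sum_filter_add_sum_filter_not univ (fun j => blocks j = B)]
    congr 1
    rw [Finset.sum_congr rfl hcopyn, Finset.sum_const, smul_eq_mul, hmult]
  have hsplit2 : m * (k * (k - 1)) + ∑ j ∈ s', n j * (n j - 1) = lam * (k * (k - 1)) := by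
    rw [← hsumpair, ← Finset.sum_filter_add_sum_filter_not univ (fun j => blocks j = B)]
    congr 1
    rw [Finset.sum_congr rfl (fun j hj => by rw [hcopyn j hj]), Finset.sum_const, smul_eq_mul,
      hmult]
  -- Cauchy–Schwarz over the non-copies
  have hsq : ∑ j ∈ s', ((n j : ℤ)) ^ 2
      = ((∑ j ∈ s', n j * (n j - 1) : ℕ) : ℤ) + ((∑ j ∈ s', n j : ℕ) : ℤ) := by
    push_cast
    rw [← Finset.sum_add_distrib]
    refine Finset.sum_congr rfl fun j _ => ?_
    have := nat_cast_mul_pred (n j)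
    push_cast at this ⊢
    linarith [this]
  have hcs : ((∑ j ∈ s', n j : ℕ) : ℤ) ^ 2
      ≤ (s'.card : ℤ) * (((∑ j ∈ s', n j * (n j - 1) : ℕ) : ℤ) + ((∑ j ∈ s', n j : ℕ) : ℤ)) := by
    rw [← hsq]
    have h := sq_sum_le_card_mul_sum_sq (s := s') (f := fun j => ((n j : ℤ)))
    push_cast
    push_cast at h
    exact h
  -- conclude by the integer arithmetic lemma
  have h1k : 1 ≤ k := by omega
  have h1v : 1 ≤ v := by omega
  have hRep : ((r x₀ : ℤ)) * ((k : ℤ) - 1) = (lam : ℤ) * ((v : ℤ) - 1) := by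
    have := hrep x₀
    zify [h1k, h1v] at this
    exact this
  have hsp : (m : ℤ) * ((k : ℤ) * ((k : ℤ) - 1)) + ((∑ j ∈ s', n j * (n j - 1) : ℕ) : ℤ)
      = (lam : ℤ) * ((k : ℤ) * ((k : ℤ) - 1)) := by
    have h := hsplit2
    zify [h1k] at h
    have hPcast : ((∑ j ∈ s', n j * (n j - 1) : ℕ) : ℤ)
        = ∑ j ∈ s', ((n j : ℤ)) * (((n j - 1 : ℕ) : ℤ)) := by
      push_cast
      rfl
    rw [hPcast]
    exact h
  have hfinal := mann_arith (v : ℤ) (k : ℤ) (lam : ℤ) (b : ℤ) (m : ℤ) (r x₀ : ℤ)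
    ((∑ j ∈ s', n j : ℕ) : ℤ) ((∑ j ∈ s', n j * (n j - 1) : ℕ) : ℤ) (s'.card : ℤ)
    (by exact_mod_cast hk2) (by exact_mod_cast hv) (by exact_mod_cast hm1)
    (by exact_mod_cast hmlam) (by exact_mod_cast hlam)
    hRep (by exact_mod_cast hbk) (by exact_mod_cast hsplit1) hsp
    (by exact_mod_cast hcard_split) hcs
  exact_mod_cast hfinal
end

section
/- Let A be an orthogonal array OA_λ(k,n) (k ≥ 2, n ≥ 2, λ ≥ 1) with N = λn² rows, with rows indexed by r ∈ {1,…,N} and columns by j ∈ {1,…,k}, and symbols from a set of size n. Define the real matrix M̃ with nk + 1 rows (indexed by the pairs (x,j) with x a symbol and j a column, plus one extra index e) and N + k columns (indexed by the row indices r of A, plus the column indices j′ of A), by: M̃[(x,j), r] = 1 if A(r,j) = x and 0 otherwise; M̃[(x,j), j′] = √λ if j = j′ and 0 otherwise; M̃[e, r] = 0; M̃[e, j′] = √λ. Then M̃M̃ᵀ = λJ + D, where J is the (nk+1)×(nk+1) all-ones matrix and D is the diagonal matrix whose diagonal entry is λn at each index (x,j) and (k−1)λ at the index e. -/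
/-- For an OA_λ(k,n), the modified incidence matrix M̃ (rows indexed by symbol-column
pairs plus one extra index, columns indexed by OA rows plus OA columns, with √λ scaling
on the group part) satisfies M̃M̃ᵀ = λJ + diag(λn, …, λn, (k−1)λ). -/
theorem oa_incidence_matrix_equation (k n lam : ℕ) (hk : 2 ≤ k) (hn : 2 ≤ n) (hlam : 1 ≤ lam)
    (A : Fin (lam * n ^ 2) → Fin k → Fin n)
    (hOA : ∀ j j' : Fin k, j ≠ j' → ∀ x y : Fin n,
      (Finset.univ.filter (fun r => A r j = x ∧ A r j' = y)).card = lam)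
    (M : Matrix ((Fin n × Fin k) ⊕ Unit) (Fin (lam * n ^ 2) ⊕ Fin k) ℝ)
    (hM₁ : ∀ (x : Fin n) (j : Fin k) (r : Fin (lam * n ^ 2)),
      M (Sum.inl (x, j)) (Sum.inl r) = if A r j = x then 1 else 0)
    (hM₂ : ∀ (x : Fin n) (j : Fin k) (j' : Fin k),
      M (Sum.inl (x, j)) (Sum.inr j') = if j = j' then Real.sqrt lam else 0)
    (hM₃ : ∀ (r : Fin (lam * n ^ 2)), M (Sum.inr ()) (Sum.inl r) = 0)
    (hM₄ : ∀ (j' : Fin k), M (Sum.inr ()) (Sum.inr j') = Real.sqrt lam) :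
    M * M.transpose =
      (lam : ℝ) • Matrix.of (fun _ _ => (1 : ℝ)) +
        Matrix.diagonal (fun idx => match idx with
          | Sum.inl _ => (lam : ℝ) * n
          | Sum.inr _ => ((k : ℝ) - 1) * lam) := by
  have hsq : Real.sqrt lam * Real.sqrt lam = (lam : ℝ) :=
    Real.mul_self_sqrt (Nat.cast_nonneg _)
  have key : ∀ (j : Fin k) (x : Fin n),
      (Finset.univ.filter (fun r => A r j = x)).card = lam * n := by
    intro j x
    obtain ⟨j', hj'⟩ := Fintype.exists_ne_of_one_lt_card (by simp; omega) j
    rw [Finset.card_eq_sum_card_fiberwise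
      (f := fun r => A r j') (t := Finset.univ) (fun _ _ => Finset.mem_univ _)]
    have h : ∀ y : Fin n,
        ((Finset.univ.filter (fun r => A r j = x)).filter (fun r => A r j' = y)).card = lam := by
      intro y
      rw [Finset.filter_filter]
      exact hOA j j' (Ne.symm hj') x y
    simp [h, mul_comm]
  have hprod : ∀ (j j' : Fin k) (x y : Fin n),
      ∑ r : Fin (lam * n ^ 2),
        (if A r j = x then (1:ℝ) else 0) * (if A r j' = y then 1 else 0)
      = ((Finset.univ.filter (fun r => A r j = x ∧ A r j' = y)).card : ℝ) := by
    intro j j' x y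
    rw [Finset.card_filter]
    push_cast
    refine Finset.sum_congr rfl fun r _ => ?_
    by_cases h1 : A r j = x <;> by_cases h2 : A r j' = y <;> simp [h1, h2]
  ext a b
  rcases a with ⟨x, j⟩ | u <;> rcases b with ⟨y, j'⟩ | v <;>
    simp only [Matrix.mul_apply, Matrix.transpose_apply, Fintype.sum_sum_type,
      Matrix.add_apply, Matrix.smul_apply, Matrix.of_apply, smul_eq_mul, mul_one,
      hM₁, hM₂, hM₃, hM₄]
  · rw [hprod]
    by_cases hjj : j = j'
    · subst hjj
      by_cases hxy : x = y
      · subst hxy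
        have : (Finset.univ.filter (fun r => A r j = x ∧ A r j = x))
            = Finset.univ.filter (fun r => A r j = x) := by
          simp [and_self]
        rw [this, key]
        simp [Matrix.diagonal_apply_eq, hsq]
        push_cast
        ring
      · have : (Finset.univ.filter (fun r => A r j = x ∧ A r j = y)) = ∅ := by
          ext r
          simp only [Finset.mem_filter, Finset.mem_univ, true_and, Finset.notMem_empty,
            iff_false]
          rintro ⟨h1, h2⟩; exact hxy (h1 ▸ h2 ▸ rfl)
        rw [this]
        rw [Matrix.diagonal_apply_ne _ (by simp [hxy])]
        simp [hsq]
    · rw [hOA j j' hjj x y]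
      rw [Matrix.diagonal_apply_ne _ (by simp [hjj])]
      have hjj' : j' ≠ j := fun h => hjj h.symm
      simp [hjj, hjj']
  · rw [Matrix.diagonal_apply_ne _ (by simp)]
    simp [hsq]
  · rw [Matrix.diagonal_apply_ne _ (by simp)]
    simp [hsq]
  · rw [Matrix.diagonal_apply_eq]
    simp [hsq, Finset.sum_const]
    push_cast
    ring
end
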